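/- arXiv:2108.10597 — 4 statements merged into one kernel-verified Lean document; each statement's English description precedes it below -/
import Mathlib

section
/- If a kernel k on the half-space R^{1+n}_+ × R^{1+n}_+ satisfies the size bound |k(x,y)| ≲ |x−y|^{-(n+1)} and the Hölder regularity bound max(|k(x,y+t)−k(x,y)|, |k(x+t,y)−k(x,y)|) ≲ |t|^γ/|x−y|^{n+1+γ} for all |t| ≤ |x−y|/2 and some fixed 0 < γ ≤ 1, then its causal truncations k^± (k^+ vanishing for t<s, k^- vanishing for t>s, where t,s are the transversal coordinates) satisfy the Hörmander regularity condition: ∫_{(3Q)^c} (|k^±(x,y₁)−k^±(x,y₂)| + |k^±(y₁,x)−k^±(y₂,x)|) dx ≲ 1 uniformly over all cubes Q ⊂ R^{1+n}_+ and points y₁, y₂ ∈ Q. -/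
open MeasureTheory Set

noncomputable section

/-- Points of `ℝ^{1+n}`, with coordinate `0` the transversal coordinate `t`. -/
abbrev HSPt (n : ℕ) := Fin (n + 1) → ℝ

/-- The upper half-space `ℝ^{1+n}_+ = {x : x 0 > 0}`. -/
def upperHalf (n : ℕ) : Set (HSPt n) := {x | 0 < x 0}

/-- Upward mapping causal truncation `k⁺` of a kernel: vanishes for `t < s` (and at `t = s`). -/
def causalPlus {n : ℕ} (k : HSPt n → HSPt n → ℝ) (x y : HSPt n) : ℝ :=
  if y 0 < x 0 then k x y else 0

/-- Downward mapping causal truncation `k⁻` of a kernel: vanishes for `t > s` (and at `t = s`). -/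
def causalMinus {n : ℕ} (k : HSPt n → HSPt n → ℝ) (x y : HSPt n) : ℝ :=
  if x 0 < y 0 then k x y else 0

lemma tail_subset_annuli {n : ℕ} (c : HSPt n) (r : ℝ) (hr : 0 < r) :
    {x : HSPt n | r ≤ dist x c} ⊆
      ⋃ j : ℕ, {x : HSPt n | 2 ^ j * r ≤ dist x c ∧ dist x c < 2 ^ (j + 1) * r} := by
  intro x hx
  have hex : ∃ j : ℕ, dist x c < 2 ^ (j + 1) * r := by
    obtain ⟨j, hj⟩ := pow_unbounded_of_one_lt (dist x c / r) (one_lt_two (α := ℝ))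
    refine ⟨j, ?_⟩
    rw [div_lt_iff₀ hr] at hj
    have h2 : (2:ℝ) ^ j ≤ 2 ^ (j + 1) := by
      apply pow_le_pow_right₀ (by norm_num); omega
    nlinarith
  classical
  have hj2 : dist x c < 2 ^ (Nat.find hex + 1) * r := Nat.find_spec hex
  have hj1 : 2 ^ (Nat.find hex) * r ≤ dist x c := by
    rcases Nat.eq_zero_or_pos (Nat.find hex) with h0 | hpos
    · rw [h0]; simpa using hx
    · have hmin := Nat.find_min hex (m := Nat.find hex - 1) (by omega)
      push_neg at hmin
      have h' : Nat.find hex - 1 + 1 = Nat.find hex := by omega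
      rwa [h'] at hmin
  exact Set.mem_iUnion.2 ⟨Nat.find hex, hj1, hj2⟩

lemma lintegral_tail_le {n : ℕ} (c : HSPt n) (S : Set (HSPt n))
    (b r : ℝ) (hb : 0 ≤ b) (hr : 0 < r) :
    ∫⁻ x in S ∩ {x | r ≤ dist x c}, ENNReal.ofReal (dist x c ^ (-b)) ≤
      ∑' j : ℕ, ENNReal.ofReal ((2 ^ j * r) ^ (-b)) *
        volume (S ∩ Metric.closedBall c (2 ^ (j + 1) * r)) := by
  have hsub : S ∩ {x : HSPt n | r ≤ dist x c} ⊆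
      ⋃ j : ℕ, S ∩ {x : HSPt n | 2 ^ j * r ≤ dist x c ∧ dist x c < 2 ^ (j + 1) * r} := by
    rw [← Set.inter_iUnion]
    exact Set.inter_subset_inter_right S (tail_subset_annuli c r hr)
  refine (lintegral_mono_set hsub).trans ?_
  refine (lintegral_iUnion_le _ _).trans ?_
  refine ENNReal.tsum_le_tsum fun j => ?_
  have h1 : ∫⁻ x in S ∩ {x : HSPt n | 2 ^ j * r ≤ dist x c ∧ dist x c < 2 ^ (j + 1) * r},
        ENNReal.ofReal (dist x c ^ (-b)) ≤
      ∫⁻ _ in S ∩ {x : HSPt n | 2 ^ j * r ≤ dist x c ∧ dist x c < 2 ^ (j + 1) * r},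
        ENNReal.ofReal ((2 ^ j * r) ^ (-b)) := by
    refine setLIntegral_mono measurable_const fun x hx => ?_
    exact ENNReal.ofReal_le_ofReal
      (Real.rpow_le_rpow_of_nonpos (by positivity) hx.2.1 (neg_nonpos.2 hb))
  refine h1.trans ?_
  rw [setLIntegral_const]
  refine mul_le_mul_right (measure_mono (Set.inter_subset_inter_right S fun x hx => ?_)) _
  exact Metric.mem_closedBall.2 hx.2.le


-- geometric sum of ofReal
lemma tsum_ofReal_geom (K q : ℝ) (hK : 0 ≤ K) (hq0 : 0 ≤ q) (hq1 : q < 1) :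
    (∑' j : ℕ, ENNReal.ofReal K * ENNReal.ofReal q ^ j) =
      ENNReal.ofReal (K * (1 - q)⁻¹) := by
  rw [ENNReal.tsum_mul_left, ENNReal.tsum_geometric]
  rw [← ENNReal.ofReal_one, ← ENNReal.ofReal_sub _ hq0,
    ← ENNReal.ofReal_inv_of_pos (by linarith), ← ENNReal.ofReal_mul hK]

lemma rpow_pow_comm (a : ℝ) (j : ℕ) : ((2:ℝ) ^ j) ^ (-a) = ((2:ℝ) ^ (-a)) ^ j := by
  rw [← Real.rpow_natCast 2 j, ← Real.rpow_natCast ((2:ℝ) ^ (-a)) j,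
    ← Real.rpow_mul (by norm_num), ← Real.rpow_mul (by norm_num), mul_comm]


lemma tail_term_identity (n : ℕ) (a r : ℝ) (ha : 0 < a) (hr : 0 < r) (j : ℕ) :
    ((2:ℝ) ^ j * r) ^ (-((n:ℝ) + 1 + a)) * (2 * (2 ^ (j + 1) * r)) ^ (n + 1)
      = (4 ^ (n + 1) * r ^ (-a)) * ((2:ℝ) ^ (-a)) ^ j := by
  have hp : (0:ℝ) < 2 ^ j * r := by positivity
  have h1 : (2 * ((2:ℝ) ^ (j + 1) * r)) ^ (n + 1) = 4 ^ (n + 1) * ((2:ℝ) ^ j * r) ^ (n + 1) := by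
    rw [← mul_pow]; ring_nf
  have h2 : ((2:ℝ) ^ j * r) ^ (-((n:ℝ) + 1 + a))
      = (((2:ℝ) ^ j * r) ^ (n + 1))⁻¹ * (((2:ℝ) ^ (-a)) ^ j * r ^ (-a)) := by
    have e1 : -((n:ℝ) + 1 + a) = -(((n+1 : ℕ) : ℝ)) + (-a) := by push_cast; ring
    rw [e1, Real.rpow_add hp, Real.rpow_neg hp.le, Real.rpow_natCast,
      Real.mul_rpow (by positivity) hr.le, rpow_pow_comm]
  rw [h1, h2]
  have hne : ((2:ℝ) ^ j * r) ^ (n + 1) ≠ 0 := by positivity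
  field_simp

lemma tail_full {n : ℕ} (c : HSPt n) (a r : ℝ) (ha : 0 < a) (hr : 0 < r) :
    ∫⁻ x in {x : HSPt n | r ≤ dist x c}, ENNReal.ofReal (dist x c ^ (-((n:ℝ) + 1 + a))) ≤
      ENNReal.ofReal ((4 ^ (n + 1) * r ^ (-a)) * (1 - 2 ^ (-a))⁻¹) := by
  have h2a : (2:ℝ) ^ (-a) < 1 :=
    Real.rpow_lt_one_of_one_lt_of_neg one_lt_two (by linarith)
  have h2a0 : (0:ℝ) ≤ 2 ^ (-a) := by positivity
  have hb : (0:ℝ) ≤ (n:ℝ) + 1 + a := by positivity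
  have h := lintegral_tail_le c Set.univ ((n:ℝ) + 1 + a) r hb hr
  rw [Set.univ_inter] at h
  refine h.trans ?_
  have hterm : ∀ j : ℕ, ENNReal.ofReal ((2 ^ j * r) ^ (-((n:ℝ) + 1 + a))) *
        volume (Set.univ ∩ Metric.closedBall c (2 ^ (j + 1) * r)) =
      ENNReal.ofReal (4 ^ (n + 1) * r ^ (-a)) * ENNReal.ofReal ((2:ℝ) ^ (-a)) ^ j := by
    intro j
    rw [Set.univ_inter, Real.volume_pi_closedBall _ (by positivity), Fintype.card_fin,
      ← ENNReal.ofReal_mul (by positivity), tail_term_identity n a r ha hr j,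
      ENNReal.ofReal_mul (by positivity), ENNReal.ofReal_pow h2a0]
  rw [tsum_congr hterm, tsum_ofReal_geom _ _ (by positivity) h2a0 h2a]

lemma slab_vol {n : ℕ} (c : HSPt n) (w R : ℝ) (hw : 0 ≤ w) (hR : 0 ≤ R) :
    volume ({x : HSPt n | |x 0 - c 0| ≤ w} ∩ Metric.closedBall c R) ≤
      ENNReal.ofReal (2 * w) * ENNReal.ofReal (2 * R) ^ n := by
  have hsub : {x : HSPt n | |x 0 - c 0| ≤ w} ∩ Metric.closedBall c R ⊆
      Set.pi Set.univ fun i : Fin (n + 1) =>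
        Set.Icc (c i - (if i = 0 then w else R)) (c i + (if i = 0 then w else R)) := by
    rintro x ⟨hx0, hxB⟩ i _
    have hx0' : |x 0 - c 0| ≤ w := hx0
    have hxB' : dist x c ≤ R := Metric.mem_closedBall.1 hxB
    have hi : |x i - c i| ≤ R := by
      have := (dist_le_pi_dist x c i).trans hxB'
      rwa [Real.dist_eq] at this
    by_cases h0 : i = 0
    · subst h0
      obtain ⟨hl, hu⟩ := abs_le.1 hx0'
      simp only [if_pos rfl, Set.mem_Icc, if_true, eq_self_iff_true]
      constructor <;> linarith
    · obtain ⟨hl, hu⟩ := abs_le.1 hi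
      simp only [if_neg h0, Set.mem_Icc]
      constructor <;> linarith
  refine (measure_mono hsub).trans ?_
  rw [volume_pi_pi]
  have : ∀ i : Fin (n + 1), volume (Set.Icc (c i - (if i = 0 then w else R))
      (c i + (if i = 0 then w else R))) = ENNReal.ofReal (2 * (if i = 0 then w else R)) := by
    intro i; rw [Real.volume_Icc]; ring_nf
  rw [Finset.prod_congr rfl (fun i _ => this i), Fin.prod_univ_succ]
  simp only [if_pos rfl]
  refine le_of_eq ?_
  congr 1
  rw [Finset.prod_congr rfl (fun i _ => by rw [if_neg (Fin.succ_ne_zero i)]),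
    Finset.prod_const, Finset.card_univ, Fintype.card_fin]

lemma slab_tail {n : ℕ} (c : HSPt n) (w r : ℝ) (hw : 0 ≤ w) (hr : 0 < r) :
    ∫⁻ x in {x : HSPt n | |x 0 - c 0| ≤ w} ∩ {x | r ≤ dist x c},
        ENNReal.ofReal (dist x c ^ (-((n:ℝ) + 1))) ≤
      ENNReal.ofReal ((2 * w * 4 ^ n / r) * 2) := by
  have hb : (0:ℝ) ≤ (n:ℝ) + 1 := by positivity
  refine (lintegral_tail_le c _ ((n:ℝ) + 1) r hb hr).trans ?_
  have hterm : ∀ j : ℕ, ENNReal.ofReal ((2 ^ j * r) ^ (-((n:ℝ) + 1))) *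
        volume ({x : HSPt n | |x 0 - c 0| ≤ w} ∩ Metric.closedBall c (2 ^ (j + 1) * r)) ≤
      ENNReal.ofReal (2 * w * 4 ^ n / r) * ENNReal.ofReal (2⁻¹ : ℝ) ^ j := by
    intro j
    refine (mul_le_mul_right (slab_vol c w _ hw (by positivity)) _).trans (le_of_eq ?_)
    rw [← ENNReal.ofReal_pow (by positivity), ← ENNReal.ofReal_mul (by positivity),
      ← ENNReal.ofReal_mul (by positivity), ← ENNReal.ofReal_pow (by norm_num),
      ← ENNReal.ofReal_mul (by positivity)]
    congr 1
    have hp : (0:ℝ) < 2 ^ j * r := by positivity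
    have h2 : ((2:ℝ) ^ j * r) ^ (-((n:ℝ) + 1)) = (((2:ℝ) ^ j * r) ^ (n + 1))⁻¹ := by
      have e1 : -((n:ℝ) + 1) = -(((n+1 : ℕ) : ℝ)) := by push_cast; ring
      rw [e1, Real.rpow_neg hp.le, Real.rpow_natCast]
    have h1 : (2 * ((2:ℝ) ^ (j + 1) * r)) ^ n = 4 ^ n * ((2:ℝ) ^ j * r) ^ n := by
      rw [← mul_pow]; ring_nf
    rw [h2, h1]
    have hne : ((2:ℝ) ^ j * r) ≠ 0 := ne_of_gt hp
    field_simp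
    have h12 : ((1:ℝ) / 2) ^ j * 2 ^ j = 1 := by rw [← mul_pow]; norm_num
    linear_combination (-(r * r ^ n * w * 2 ^ (j * n))) * h12
  refine (ENNReal.tsum_le_tsum hterm).trans (le_of_eq ?_)
  rw [tsum_ofReal_geom _ _ (by positivity) (by norm_num) (by norm_num)]
  norm_num
lemma ite_diff_bound (p q slab : Prop) [Decidable p] [Decidable q] [Decidable slab]
    (A B H S : ℝ) (hH : 0 ≤ H) (hS : 0 ≤ S) (hAB : |A - B| ≤ H) (hA : |A| ≤ S) (hB : |B| ≤ S)
    (hmix : ((p ∧ ¬ q) ∨ (q ∧ ¬ p)) → slab) :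
    |(if p then A else 0) - (if q then B else 0)| ≤ H + (if slab then 2 * S else 0) := by
  have hslab0 : (0:ℝ) ≤ if slab then 2 * S else 0 := by split <;> simp <;> linarith
  by_cases hp : p <;> by_cases hq : q
  · simp only [if_pos hp, if_pos hq]; linarith
  · rw [if_pos hp, if_neg hq, if_pos (hmix (Or.inl ⟨hp, hq⟩)), sub_zero]; linarith
  · rw [if_neg hp, if_pos hq, if_pos (hmix (Or.inr ⟨hq, hp⟩)), zero_sub, abs_neg]; linarith
  · simp only [if_neg hp, if_neg hq, sub_zero, abs_zero]; linarith
section Pointwise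
open Metric

variable {n : ℕ} {γ CK : ℝ} {k : HSPt n → HSPt n → ℝ} {c y₁ y₂ x : HSPt n} {ℓ : ℝ}

/-- distance lower bounds for points outside `3Q` -/
lemma dist_lb (hℓ : 0 < ℓ) (hy : y₁ ∈ closedBall c (ℓ / 2)) (hx : 3 * ℓ ≤ dist x c) :
    dist x c / 3 ≤ dist x y₁ ∧ 5 * ℓ / 2 ≤ dist x y₁ := by
  have h1 : dist x c ≤ dist x y₁ + dist y₁ c := dist_triangle x y₁ c
  have h2 : dist y₁ c ≤ ℓ / 2 := mem_closedBall.1 hy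
  constructor <;> linarith

lemma size_est (hCK : 0 < CK)
    (hsize : ∀ x y : HSPt n, x ≠ y → |k x y| ≤ CK * ‖x - y‖ ^ (-((n : ℝ) + 1)))
    (hℓ : 0 < ℓ) (hy : y₁ ∈ closedBall c (ℓ / 2)) (hx : 3 * ℓ ≤ dist x c)
    (hd : dist x c / 3 ≤ dist x y₁) :
    |k x y₁| ≤ CK * 3 ^ ((n : ℝ) + 1) * dist x c ^ (-((n : ℝ) + 1)) := by
  have hc0 : 0 < dist x c := by linarith
  have hd0 : 0 < dist x y₁ := by linarith
  have hne : x ≠ y₁ := dist_pos.1 hd0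
  have h1 := hsize x y₁ hne
  rw [← dist_eq_norm] at h1
  have h2 : dist x y₁ ^ (-((n : ℝ) + 1)) ≤ (dist x c / 3) ^ (-((n : ℝ) + 1)) :=
    Real.rpow_le_rpow_of_nonpos (by positivity) hd (neg_nonpos.2 (by positivity))
  have h3 : (dist x c / 3) ^ (-((n : ℝ) + 1)) = 3 ^ ((n : ℝ) + 1) * dist x c ^ (-((n : ℝ) + 1)) := by
    rw [Real.div_rpow hc0.le (by norm_num : (0:ℝ) ≤ 3),
      Real.rpow_neg (by norm_num : (0:ℝ) ≤ 3), div_eq_mul_inv, inv_inv, mul_comm]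
  calc |k x y₁| ≤ CK * dist x y₁ ^ (-((n : ℝ) + 1)) := h1
    _ ≤ CK * (dist x c / 3) ^ (-((n : ℝ) + 1)) := by nlinarith
    _ = CK * 3 ^ ((n : ℝ) + 1) * dist x c ^ (-((n : ℝ) + 1)) := by rw [h3]; ring

lemma reg_est (hγ0 : 0 < γ) (hCK : 0 < CK)
    (hreg : ∀ x y t : HSPt n, x ≠ y → ‖t‖ ≤ ‖x - y‖ / 2 →
        max |k x (y + t) - k x y| |k (x + t) y - k x y| ≤
          CK * ‖t‖ ^ γ / ‖x - y‖ ^ ((n : ℝ) + 1 + γ))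
    (hℓ : 0 < ℓ) (hy₁ : y₁ ∈ closedBall c (ℓ / 2)) (hy₂ : y₂ ∈ closedBall c (ℓ / 2))
    (hx : 3 * ℓ ≤ dist x c) :
    |k x y₁ - k x y₂| ≤ CK * ℓ ^ γ * 3 ^ ((n : ℝ) + 1 + γ) * dist x c ^ (-((n : ℝ) + 1 + γ)) ∧
    |k y₁ x - k y₂ x| ≤ CK * ℓ ^ γ * 3 ^ ((n : ℝ) + 1 + γ) * dist x c ^ (-((n : ℝ) + 1 + γ)) := by
  obtain ⟨hd3, hd5⟩ := dist_lb hℓ hy₂ hx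
  have hc0 : 0 < dist x c := by linarith
  have hd0 : 0 < dist x y₂ := by linarith
  have hne : x ≠ y₂ := dist_pos.1 hd0
  have htl : ‖y₁ - y₂‖ ≤ ℓ := by
    rw [← dist_eq_norm]
    have := dist_triangle y₁ c y₂
    have h1 : dist y₁ c ≤ ℓ / 2 := mem_closedBall.1 hy₁
    have h2 : dist c y₂ ≤ ℓ / 2 := by rw [dist_comm]; exact mem_closedBall.1 hy₂
    linarith
  have hxy2 : ‖x - y₂‖ = dist x y₂ := (dist_eq_norm x y₂).symm
  have htl' : dist y₁ y₂ ≤ ℓ := by rw [dist_eq_norm]; exact htl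
  have hts : ‖y₁ - y₂‖ ≤ ‖x - y₂‖ / 2 := by
    rw [hxy2, ← dist_eq_norm]; linarith
  have hadd : y₂ + (y₁ - y₂) = y₁ := by abel
  -- common RHS bound
  have hbound : CK * ‖y₁ - y₂‖ ^ γ / ‖x - y₂‖ ^ ((n : ℝ) + 1 + γ) ≤
      CK * ℓ ^ γ * 3 ^ ((n : ℝ) + 1 + γ) * dist x c ^ (-((n : ℝ) + 1 + γ)) := by
    rw [hxy2]
    have hnum : CK * ‖y₁ - y₂‖ ^ γ ≤ CK * ℓ ^ γ := by
      have := Real.rpow_le_rpow (norm_nonneg _) htl hγ0.le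
      nlinarith
    have hden : (dist x c / 3) ^ ((n : ℝ) + 1 + γ) ≤ dist x y₂ ^ ((n : ℝ) + 1 + γ) :=
      Real.rpow_le_rpow (by positivity) hd3 (by positivity)
    have h4 : CK * ‖y₁ - y₂‖ ^ γ / dist x y₂ ^ ((n : ℝ) + 1 + γ) ≤
        CK * ℓ ^ γ / (dist x c / 3) ^ ((n : ℝ) + 1 + γ) :=
      div_le_div₀ (by positivity) hnum (by positivity) hden
    refine h4.trans (le_of_eq ?_)
    rw [Real.div_rpow hc0.le (by norm_num : (0:ℝ) ≤ 3),
      Real.rpow_neg hc0.le, div_div_eq_mul_div, div_eq_mul_inv]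
  constructor
  · have h := hreg x y₂ (y₁ - y₂) hne hts
    rw [hadd] at h
    exact ((le_max_left _ _).trans h).trans hbound
  · have hne' : y₂ ≠ x := hne.symm
    have hts' : ‖y₁ - y₂‖ ≤ ‖y₂ - x‖ / 2 := by rwa [norm_sub_rev y₂ x]
    have h := hreg y₂ x (y₁ - y₂) hne' hts'
    rw [hadd, norm_sub_rev y₂ x] at h
    exact ((le_max_right _ _).trans h).trans hbound

end Pointwise
section Pointwise2
open Metric

variable {n : ℕ} {γ CK : ℝ} {k : HSPt n → HSPt n → ℝ} {c y₁ y₂ x : HSPt n} {ℓ : ℝ}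

lemma size_est' (hCK : 0 < CK)
    (hsize : ∀ x y : HSPt n, x ≠ y → |k x y| ≤ CK * ‖x - y‖ ^ (-((n : ℝ) + 1)))
    (hℓ : 0 < ℓ) (hy : y₁ ∈ closedBall c (ℓ / 2)) (hx : 3 * ℓ ≤ dist x c)
    (hd : dist x c / 3 ≤ dist x y₁) :
    |k y₁ x| ≤ CK * 3 ^ ((n : ℝ) + 1) * dist x c ^ (-((n : ℝ) + 1)) := by
  have hc0 : 0 < dist x c := by linarith
  have hd0 : 0 < dist x y₁ := by linarith
  have hne : y₁ ≠ x := (dist_pos.1 hd0).symm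
  have h1 := hsize y₁ x hne
  rw [norm_sub_rev, ← dist_eq_norm] at h1
  have h2 : dist x y₁ ^ (-((n : ℝ) + 1)) ≤ (dist x c / 3) ^ (-((n : ℝ) + 1)) :=
    Real.rpow_le_rpow_of_nonpos (by positivity) hd (neg_nonpos.2 (by positivity))
  have h3 : (dist x c / 3) ^ (-((n : ℝ) + 1)) = 3 ^ ((n : ℝ) + 1) * dist x c ^ (-((n : ℝ) + 1)) := by
    rw [Real.div_rpow hc0.le (by norm_num : (0:ℝ) ≤ 3),
      Real.rpow_neg (by norm_num : (0:ℝ) ≤ 3), div_eq_mul_inv, inv_inv, mul_comm]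
  calc |k y₁ x| ≤ CK * dist x y₁ ^ (-((n : ℝ) + 1)) := h1
    _ ≤ CK * (dist x c / 3) ^ (-((n : ℝ) + 1)) := by nlinarith
    _ = CK * 3 ^ ((n : ℝ) + 1) * dist x c ^ (-((n : ℝ) + 1)) := by rw [h3]; ring

lemma far_pointwise (hγ0 : 0 < γ) (hCK : 0 < CK)
    (hsize : ∀ x y : HSPt n, x ≠ y → |k x y| ≤ CK * ‖x - y‖ ^ (-((n : ℝ) + 1)))
    (hreg : ∀ x y t : HSPt n, x ≠ y → ‖t‖ ≤ ‖x - y‖ / 2 →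
        max |k x (y + t) - k x y| |k (x + t) y - k x y| ≤
          CK * ‖t‖ ^ γ / ‖x - y‖ ^ ((n : ℝ) + 1 + γ))
    {kc : HSPt n → HSPt n → ℝ} (hkc : kc = causalPlus k ∨ kc = causalMinus k)
    (hℓ : 0 < ℓ)
    (hy₁ : y₁ ∈ closedBall c (ℓ / 2)) (hy₂ : y₂ ∈ closedBall c (ℓ / 2))
    (hx : 3 * ℓ ≤ dist x c) :
    |kc x y₁ - kc x y₂| + |kc y₁ x - kc y₂ x| ≤
      2 * (CK * ℓ ^ γ * 3 ^ ((n : ℝ) + 1 + γ) * dist x c ^ (-((n : ℝ) + 1 + γ))) +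
      (if |x 0 - c 0| ≤ ℓ / 2 then
        4 * (CK * 3 ^ ((n : ℝ) + 1) * dist x c ^ (-((n : ℝ) + 1))) else 0) := by
  classical
  set H : ℝ := CK * ℓ ^ γ * 3 ^ ((n : ℝ) + 1 + γ) * dist x c ^ (-((n : ℝ) + 1 + γ)) with hHdef
  set S : ℝ := CK * 3 ^ ((n : ℝ) + 1) * dist x c ^ (-((n : ℝ) + 1)) with hSdef
  have hH : 0 ≤ H := by rw [hHdef]; positivity
  have hS : 0 ≤ S := by rw [hSdef]; positivity
  obtain ⟨hd31, _⟩ := dist_lb hℓ hy₁ hx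
  obtain ⟨hd32, _⟩ := dist_lb hℓ hy₂ hx
  have hS1 : |k x y₁| ≤ S := size_est hCK hsize hℓ hy₁ hx hd31
  have hS2 : |k x y₂| ≤ S := size_est hCK hsize hℓ hy₂ hx hd32
  have hS1' : |k y₁ x| ≤ S := size_est' hCK hsize hℓ hy₁ hx hd31
  have hS2' : |k y₂ x| ≤ S := size_est' hCK hsize hℓ hy₂ hx hd32
  obtain ⟨hreg1, hreg2⟩ := reg_est hγ0 hCK hreg hℓ hy₁ hy₂ hx
  have hy10 : |y₁ 0 - c 0| ≤ ℓ / 2 := by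
    have h := (dist_le_pi_dist y₁ c 0).trans (mem_closedBall.1 hy₁)
    rwa [Real.dist_eq] at h
  have hy20 : |y₂ 0 - c 0| ≤ ℓ / 2 := by
    have h := (dist_le_pi_dist y₂ c 0).trans (mem_closedBall.1 hy₂)
    rwa [Real.dist_eq] at h
  have hmixa : ((y₁ 0 < x 0 ∧ ¬ y₂ 0 < x 0) ∨ (y₂ 0 < x 0 ∧ ¬ y₁ 0 < x 0)) →
      |x 0 - c 0| ≤ ℓ / 2 := by
    rw [abs_le] at hy10 hy20 ⊢
    rintro (⟨h1, h2⟩ | ⟨h1, h2⟩) <;> push_neg at h2 <;> constructor <;> linarith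
  have hmixb : ((x 0 < y₁ 0 ∧ ¬ x 0 < y₂ 0) ∨ (x 0 < y₂ 0 ∧ ¬ x 0 < y₁ 0)) →
      |x 0 - c 0| ≤ ℓ / 2 := by
    rw [abs_le] at hy10 hy20 ⊢
    rintro (⟨h1, h2⟩ | ⟨h1, h2⟩) <;> push_neg at h2 <;> constructor <;> linarith
  rcases hkc with h | h <;> subst h <;>
    simp only [causalPlus, causalMinus]
  · have T1 := ite_diff_bound (y₁ 0 < x 0) (y₂ 0 < x 0) (|x 0 - c 0| ≤ ℓ / 2)
      (k x y₁) (k x y₂) H S hH hS hreg1 hS1 hS2 hmixa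
    have T2 := ite_diff_bound (x 0 < y₁ 0) (x 0 < y₂ 0) (|x 0 - c 0| ≤ ℓ / 2)
      (k y₁ x) (k y₂ x) H S hH hS hreg2 hS1' hS2' hmixb
    by_cases hs : |x 0 - c 0| ≤ ℓ / 2
    · simp only [if_pos hs] at T1 T2 ⊢; linarith
    · simp only [if_neg hs] at T1 T2 ⊢; linarith
  · have T1 := ite_diff_bound (x 0 < y₁ 0) (x 0 < y₂ 0) (|x 0 - c 0| ≤ ℓ / 2)
      (k x y₁) (k x y₂) H S hH hS hreg1 hS1 hS2 hmixb
    have T2 := ite_diff_bound (y₁ 0 < x 0) (y₂ 0 < x 0) (|x 0 - c 0| ≤ ℓ / 2)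
      (k y₁ x) (k y₂ x) H S hH hS hreg2 hS1' hS2' hmixa
    by_cases hs : |x 0 - c 0| ≤ ℓ / 2
    · simp only [if_pos hs] at T1 T2 ⊢; linarith
    · simp only [if_neg hs] at T1 T2 ⊢; linarith

end Pointwise2
section Near
open Metric

variable {n : ℕ} {CK : ℝ} {k : HSPt n → HSPt n → ℝ} {c y₁ y₂ x : HSPt n} {ℓ : ℝ}

lemma measurable_dist_rpow (c : HSPt n) (e : ℝ) :
    Measurable fun x : HSPt n => dist x c ^ e := by
  have hmd : Measurable fun x : HSPt n => dist x c :=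
    (continuous_id.dist continuous_const).measurable
  have heq : (fun x : HSPt n => dist x c ^ e) =
      fun x => if dist x c = 0 then (if e = 0 then 1 else 0)
        else Real.exp (Real.log (dist x c) * e) := by
    funext x
    rcases eq_or_lt_of_le (dist_nonneg : (0:ℝ) ≤ dist x c) with h | h
    · rw [if_pos h.symm, ← h]
      by_cases he : e = 0
      · rw [if_pos he, he, Real.rpow_zero]
      · rw [if_neg he, Real.zero_rpow he]
    · rw [if_neg (ne_of_gt h), Real.rpow_def_of_pos h]
  rw [heq]
  exact Measurable.ite (hmd (measurableSet_singleton 0)) measurable_const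
    (((Real.measurable_log.comp hmd).mul_const e).exp)

lemma near_pointwise (hCK : 0 < CK)
    (hsize : ∀ x y : HSPt n, x ≠ y → |k x y| ≤ CK * ‖x - y‖ ^ (-((n : ℝ) + 1)))
    {kc : HSPt n → HSPt n → ℝ} (hkc : kc = causalPlus k ∨ kc = causalMinus k)
    (hℓ : 0 < ℓ) (hy₁ : y₁ ∈ closedBall c (ℓ / 2)) (hy₂ : y₂ ∈ closedBall c (ℓ / 2))
    (hx : 3 * ℓ / 2 < dist x c) :
    |kc x y₁ - kc x y₂| + |kc y₁ x - kc y₂ x| ≤ 4 * (CK * ℓ ^ (-((n : ℝ) + 1))) := by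
  classical
  have key : ∀ y : HSPt n, y ∈ closedBall c (ℓ / 2) →
      |k x y| ≤ CK * ℓ ^ (-((n:ℝ)+1)) ∧ |k y x| ≤ CK * ℓ ^ (-((n:ℝ)+1)) := by
    intro y hy
    have h1 : dist x c ≤ dist x y + dist y c := dist_triangle x y c
    have h2 : dist y c ≤ ℓ / 2 := mem_closedBall.1 hy
    have hdy : ℓ ≤ dist x y := by linarith
    have hd0 : 0 < dist x y := by linarith
    have hne : x ≠ y := dist_pos.1 hd0
    have hmono : dist x y ^ (-((n:ℝ)+1)) ≤ ℓ ^ (-((n:ℝ)+1)) :=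
      Real.rpow_le_rpow_of_nonpos hℓ hdy (neg_nonpos.2 (by positivity))
    constructor
    · have h := hsize x y hne
      rw [← dist_eq_norm] at h
      nlinarith
    · have h := hsize y x hne.symm
      rw [norm_sub_rev, ← dist_eq_norm] at h
      nlinarith
  obtain ⟨ha1, hb1⟩ := key y₁ hy₁
  obtain ⟨ha2, hb2⟩ := key y₂ hy₂
  have tri : ∀ a b : ℝ, |a - b| ≤ |a| + |b| := fun a b => by
    rw [sub_eq_add_neg]
    exact (abs_add_le _ _).trans (by rw [abs_neg])
  have hite : ∀ (p : Prop) (_ : Decidable p) (A : ℝ), |(if p then A else 0)| ≤ |A| := by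
    intro p hp A
    split_ifs
    · exact le_refl _
    · simp [abs_nonneg]
  rcases hkc with h | h <;> subst h <;> simp only [causalPlus, causalMinus]
  · have u1 := (tri (if y₁ 0 < x 0 then k x y₁ else 0) (if y₂ 0 < x 0 then k x y₂ else 0)).trans
      (add_le_add (hite (y₁ 0 < x 0) _ (k x y₁)) (hite (y₂ 0 < x 0) _ (k x y₂)))
    have u2 := (tri (if x 0 < y₁ 0 then k y₁ x else 0) (if x 0 < y₂ 0 then k y₂ x else 0)).trans
      (add_le_add (hite (x 0 < y₁ 0) _ (k y₁ x)) (hite (x 0 < y₂ 0) _ (k y₂ x)))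
    linarith
  · have u1 := (tri (if x 0 < y₁ 0 then k x y₁ else 0) (if x 0 < y₂ 0 then k x y₂ else 0)).trans
      (add_le_add (hite (x 0 < y₁ 0) _ (k x y₁)) (hite (x 0 < y₂ 0) _ (k x y₂)))
    have u2 := (tri (if y₁ 0 < x 0 then k y₁ x else 0) (if y₂ 0 < x 0 then k y₂ x else 0)).trans
      (add_le_add (hite (y₁ 0 < x 0) _ (k y₁ x)) (hite (y₂ 0 < x 0) _ (k y₂ x)))
    linarith

end Near
/-- If `k` satisfies the Calderón–Zygmund size bound
`|k(x,y)| ≤ CK |x-y|^{-(n+1)}` and the Hölder regularity bound of order `γ ∈ (0,1]`,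
then both causal truncations `k⁺`, `k⁻` satisfy the Hörmander regularity condition on the
half-space: `∫_{(3Q)ᶜ} (|k^±(x,y₁) - k^±(x,y₂)| + |k^±(y₁,x) - k^±(y₂,x)|) dx ≤ C`,
uniformly over all cubes `Q ⊆ ℝ^{1+n}_+` (cubes are sup-norm balls) and `y₁, y₂ ∈ Q`,
with `C` depending only on `n`, `γ` and `CK`. -/
theorem causal_truncations_hormander (n : ℕ) (γ CK : ℝ)
    (hγ0 : 0 < γ) (hγ1 : γ ≤ 1) (hCK : 0 < CK) :
    ∃ C : ℝ, 0 < C ∧ ∀ k : HSPt n → HSPt n → ℝ,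
      (∀ x y : HSPt n, x ≠ y → |k x y| ≤ CK * ‖x - y‖ ^ (-((n : ℝ) + 1))) →
      (∀ x y t : HSPt n, x ≠ y → ‖t‖ ≤ ‖x - y‖ / 2 →
        max |k x (y + t) - k x y| |k (x + t) y - k x y| ≤
          CK * ‖t‖ ^ γ / ‖x - y‖ ^ ((n : ℝ) + 1 + γ)) →
      ∀ kc ∈ ({causalPlus k, causalMinus k} : Set (HSPt n → HSPt n → ℝ)),
      ∀ (c : HSPt n) (ℓ : ℝ), 0 < ℓ →
        Metric.closedBall c (ℓ / 2) ⊆ upperHalf n →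
        ∀ y₁ ∈ Metric.closedBall c (ℓ / 2), ∀ y₂ ∈ Metric.closedBall c (ℓ / 2),
          (∫⁻ x in (Metric.closedBall c (3 * ℓ / 2))ᶜ ∩ upperHalf n,
              (ENNReal.ofReal |kc x y₁ - kc x y₂| +
                ENNReal.ofReal |kc y₁ x - kc y₂ x|)) ≤ ENNReal.ofReal C := by
  classical
  have h2γ : (2:ℝ) ^ (-γ) < 1 :=
    Real.rpow_lt_one_of_one_lt_of_neg one_lt_two (by linarith)
  have h2γ0 : (0:ℝ) < 1 - 2 ^ (-γ) := by linarith
  set B₁ : ℝ := 4 * (CK * 6 ^ (n + 1)) with hB₁def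
  set B₂ : ℝ := 2 * (CK * 3 ^ ((n:ℝ) + 1 + γ)) * ((4 ^ (n + 1) * 3 ^ (-γ)) * (1 - 2 ^ (-γ))⁻¹)
    with hB₂def
  set B₃ : ℝ := 4 * (CK * 3 ^ ((n:ℝ) + 1)) * (2 * 4 ^ n / 3) with hB₃def
  have hB₁ : 0 < B₁ := by rw [hB₁def]; positivity
  have hB₂ : 0 < B₂ := by
    rw [hB₂def]
    have h1 : (0:ℝ) < 3 ^ ((n:ℝ) + 1 + γ) := Real.rpow_pos_of_pos (by norm_num) _
    have h2 : (0:ℝ) < 3 ^ (-γ) := Real.rpow_pos_of_pos (by norm_num) _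
    have h3 : (0:ℝ) < (1 - 2 ^ (-γ))⁻¹ := inv_pos.2 h2γ0
    positivity
  have hB₃ : 0 < B₃ := by
    rw [hB₃def]
    have h1 : (0:ℝ) < 3 ^ ((n:ℝ) + 1) := Real.rpow_pos_of_pos (by norm_num) _
    positivity
  refine ⟨B₁ + B₂ + B₃, by positivity, ?_⟩
  intro k hsize hreg kc hkc c ℓ hℓ _ y₁ hy₁ y₂ hy₂
  simp only [Set.mem_insert_iff, Set.mem_singleton_iff] at hkc
  -- the three majorant functions
  set f₁ : HSPt n → ENNReal := (Metric.closedBall c (3 * ℓ)).indicator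
    (fun _ => ENNReal.ofReal (4 * (CK * ℓ ^ (-((n:ℝ) + 1))))) with hf₁def
  set f₂ : HSPt n → ENNReal := {x : HSPt n | 3 * ℓ ≤ dist x c}.indicator
    (fun x => ENNReal.ofReal
      (2 * (CK * ℓ ^ γ * 3 ^ ((n:ℝ) + 1 + γ) * dist x c ^ (-((n:ℝ) + 1 + γ))))) with hf₂def
  set f₃ : HSPt n → ENNReal := ({x : HSPt n | |x 0 - c 0| ≤ ℓ / 2} ∩
      {x : HSPt n | 3 * ℓ ≤ dist x c}).indicator
    (fun x => ENNReal.ofReal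
      (4 * (CK * 3 ^ ((n:ℝ) + 1) * dist x c ^ (-((n:ℝ) + 1))))) with hf₃def
  have hmdist : Measurable fun x : HSPt n => dist x c :=
    (continuous_id.dist continuous_const).measurable
  have hms2 : MeasurableSet {x : HSPt n | 3 * ℓ ≤ dist x c} :=
    measurableSet_le measurable_const hmdist
  have hms3 : MeasurableSet ({x : HSPt n | |x 0 - c 0| ≤ ℓ / 2} ∩
      {x : HSPt n | 3 * ℓ ≤ dist x c}) :=
    (measurableSet_le (((measurable_pi_apply 0).sub measurable_const).abs)
      measurable_const).inter hms2
  have hm1 : Measurable f₁ := measurable_const.indicator measurableSet_closedBall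
  have hm2 : Measurable f₂ := by
    refine Measurable.indicator ?_ hms2
    exact (((measurable_dist_rpow c (-((n:ℝ) + 1 + γ))).const_mul
      (CK * ℓ ^ γ * 3 ^ ((n:ℝ) + 1 + γ))).const_mul 2).ennreal_ofReal
  have hm3 : Measurable f₃ := by
    refine Measurable.indicator ?_ hms3
    exact (((measurable_dist_rpow c (-((n:ℝ) + 1))).const_mul
      (CK * 3 ^ ((n:ℝ) + 1))).const_mul 4).ennreal_ofReal
  -- pointwise bound on the domain
  have hpt : ∀ x ∈ (Metric.closedBall c (3 * ℓ / 2))ᶜ ∩ upperHalf n,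
      ENNReal.ofReal |kc x y₁ - kc x y₂| + ENNReal.ofReal |kc y₁ x - kc y₂ x| ≤
        f₁ x + f₂ x + f₃ x := by
    rintro x ⟨hx1, -⟩
    have hxd : 3 * ℓ / 2 < dist x c := by
      by_contra h
      push_neg at h
      exact hx1 (Metric.mem_closedBall.2 h)
    rw [← ENNReal.ofReal_add (abs_nonneg _) (abs_nonneg _)]
    by_cases hfar : 3 * ℓ ≤ dist x c
    · have hfp := far_pointwise hγ0 hCK hsize hreg hkc hℓ hy₁ hy₂ hfar
      have hf₂x : f₂ x = ENNReal.ofReal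
          (2 * (CK * ℓ ^ γ * 3 ^ ((n:ℝ) + 1 + γ) * dist x c ^ (-((n:ℝ) + 1 + γ)))) :=
        Set.indicator_of_mem (show x ∈ {x : HSPt n | 3 * ℓ ≤ dist x c} from hfar) _
      by_cases hs : |x 0 - c 0| ≤ ℓ / 2
      · have hf₃x : f₃ x = ENNReal.ofReal
            (4 * (CK * 3 ^ ((n:ℝ) + 1) * dist x c ^ (-((n:ℝ) + 1)))) :=
          Set.indicator_of_mem (show x ∈ {x : HSPt n | |x 0 - c 0| ≤ ℓ / 2} ∩ {x : HSPt n | 3 * ℓ ≤ dist x c} from ⟨hs, hfar⟩) _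
        rw [if_pos hs] at hfp
        calc ENNReal.ofReal (|kc x y₁ - kc x y₂| + |kc y₁ x - kc y₂ x|) ≤
            ENNReal.ofReal (2 * (CK * ℓ ^ γ * 3 ^ ((n:ℝ) + 1 + γ) *
                dist x c ^ (-((n:ℝ) + 1 + γ))) +
              4 * (CK * 3 ^ ((n:ℝ) + 1) * dist x c ^ (-((n:ℝ) + 1)))) :=
            ENNReal.ofReal_le_ofReal hfp
          _ = f₂ x + f₃ x := by
            rw [hf₂x, hf₃x, ← ENNReal.ofReal_add (by positivity) (by positivity)]
          _ ≤ f₁ x + f₂ x + f₃ x := by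
            rw [add_assoc]
            exact le_add_self
      · have hf₃x : f₃ x = 0 := Set.indicator_of_notMem (fun hmem => hs hmem.1) _
        rw [if_neg hs, add_zero] at hfp
        calc ENNReal.ofReal (|kc x y₁ - kc x y₂| + |kc y₁ x - kc y₂ x|) ≤
            ENNReal.ofReal (2 * (CK * ℓ ^ γ * 3 ^ ((n:ℝ) + 1 + γ) *
                dist x c ^ (-((n:ℝ) + 1 + γ)))) := ENNReal.ofReal_le_ofReal hfp
          _ = f₂ x := hf₂x.symm
          _ ≤ f₁ x + f₂ x + f₃ x := by
            rw [add_assoc]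
            exact le_trans le_self_add le_add_self
    · have hnear := near_pointwise hCK hsize hkc hℓ hy₁ hy₂ hxd
      push_neg at hfar
      have hf₁x : f₁ x = ENNReal.ofReal (4 * (CK * ℓ ^ (-((n:ℝ) + 1)))) :=
        Set.indicator_of_mem (Metric.mem_closedBall.2 hfar.le) _
      calc ENNReal.ofReal (|kc x y₁ - kc x y₂| + |kc y₁ x - kc y₂ x|) ≤
          ENNReal.ofReal (4 * (CK * ℓ ^ (-((n:ℝ) + 1)))) := ENNReal.ofReal_le_ofReal hnear
        _ = f₁ x := hf₁x.symm
        _ ≤ f₁ x + f₂ x + f₃ x := le_trans le_self_add le_self_add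
  -- integral of f₁
  have I₁ : ∫⁻ x, f₁ x ≤ ENNReal.ofReal B₁ := by
    rw [hf₁def, lintegral_indicator measurableSet_closedBall, setLIntegral_const,
      Real.volume_pi_closedBall c (by positivity : (0:ℝ) ≤ 3 * ℓ), Fintype.card_fin,
      ← ENNReal.ofReal_mul (by positivity)]
    refine ENNReal.ofReal_le_ofReal (le_of_eq ?_)
    have e1 : -((n:ℝ) + 1) = -(((n + 1 : ℕ) : ℝ)) := by push_cast; ring
    have hinv : ℓ ^ (-((n:ℝ) + 1)) * ℓ ^ (n + 1) = 1 := by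
      rw [e1, Real.rpow_neg hℓ.le, Real.rpow_natCast]
      exact inv_mul_cancel₀ (pow_ne_zero _ hℓ.ne')
    have e2 : (2 * (3 * ℓ)) ^ (n + 1) = 6 ^ (n + 1) * ℓ ^ (n + 1) := by
      rw [show 2 * (3 * ℓ) = 6 * ℓ by ring, mul_pow]
    rw [e2, hB₁def]
    linear_combination (4 * CK * (6:ℝ) ^ (n + 1)) * hinv
  -- integral of f₂
  have I₂ : ∫⁻ x, f₂ x ≤ ENNReal.ofReal B₂ := by
    rw [hf₂def, lintegral_indicator hms2]
    have hptw : ∀ x : HSPt n, ENNReal.ofReal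
        (2 * (CK * ℓ ^ γ * 3 ^ ((n:ℝ) + 1 + γ) * dist x c ^ (-((n:ℝ) + 1 + γ)))) =
        ENNReal.ofReal (2 * (CK * ℓ ^ γ * 3 ^ ((n:ℝ) + 1 + γ))) *
          ENNReal.ofReal (dist x c ^ (-((n:ℝ) + 1 + γ))) := by
      intro x
      rw [← ENNReal.ofReal_mul (by positivity)]
      congr 1
      ring
    simp only [hptw]
    rw [lintegral_const_mul' _ _ ENNReal.ofReal_ne_top]
    refine le_trans (mul_le_mul_right (tail_full c γ (3 * ℓ) hγ0 (by positivity)) _) ?_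
    rw [← ENNReal.ofReal_mul (by positivity)]
    refine ENNReal.ofReal_le_ofReal (le_of_eq ?_)
    have h3ℓ : ((3:ℝ) * ℓ) ^ (-γ) = 3 ^ (-γ) * ℓ ^ (-γ) :=
      Real.mul_rpow (by norm_num) hℓ.le
    have hγγ : ℓ ^ γ * ℓ ^ (-γ) = 1 := by
      rw [← Real.rpow_add hℓ]
      simp
    rw [h3ℓ, hB₂def]
    linear_combination (2 * CK * (3:ℝ) ^ ((n:ℝ) + 1 + γ) * 4 ^ (n + 1) * 3 ^ (-γ) *
      (1 - 2 ^ (-γ))⁻¹) * hγγ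
  -- integral of f₃
  have I₃ : ∫⁻ x, f₃ x ≤ ENNReal.ofReal B₃ := by
    rw [hf₃def, lintegral_indicator hms3]
    have hptw : ∀ x : HSPt n, ENNReal.ofReal
        (4 * (CK * 3 ^ ((n:ℝ) + 1) * dist x c ^ (-((n:ℝ) + 1)))) =
        ENNReal.ofReal (4 * (CK * 3 ^ ((n:ℝ) + 1))) *
          ENNReal.ofReal (dist x c ^ (-((n:ℝ) + 1))) := by
      intro x
      rw [← ENNReal.ofReal_mul (by positivity)]
      congr 1
      ring
    simp only [hptw]
    rw [lintegral_const_mul' _ _ ENNReal.ofReal_ne_top]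
    refine le_trans (mul_le_mul_right
      (slab_tail c (ℓ / 2) (3 * ℓ) (by positivity) (by positivity)) _) ?_
    rw [← ENNReal.ofReal_mul (by positivity)]
    refine ENNReal.ofReal_le_ofReal (le_of_eq ?_)
    rw [hB₃def]
    field_simp
  -- put everything together
  calc ∫⁻ x in (Metric.closedBall c (3 * ℓ / 2))ᶜ ∩ upperHalf n,
        (ENNReal.ofReal |kc x y₁ - kc x y₂| + ENNReal.ofReal |kc y₁ x - kc y₂ x|) ≤
      ∫⁻ x in (Metric.closedBall c (3 * ℓ / 2))ᶜ ∩ upperHalf n, (f₁ x + f₂ x + f₃ x) :=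
        setLIntegral_mono ((hm1.add hm2).add hm3) hpt
    _ ≤ ∫⁻ x, (f₁ x + f₂ x + f₃ x) := setLIntegral_le_lintegral _ _
    _ = (∫⁻ x, f₁ x) + (∫⁻ x, f₂ x) + (∫⁻ x, f₃ x) := by
        rw [lintegral_add_left (f := fun x => f₁ x + f₂ x) (hm1.add hm2), lintegral_add_left hm1]
    _ ≤ ENNReal.ofReal B₁ + ENNReal.ofReal B₂ + ENNReal.ofReal B₃ :=
        add_le_add (add_le_add I₁ I₂) I₃
    _ = ENNReal.ofReal (B₁ + B₂ + B₃) := by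
        rw [← ENNReal.ofReal_add hB₁.le hB₂.le, ← ENNReal.ofReal_add (by positivity) hB₃.le]
end
end

section
/- Sparse duality estimate with shifted averages: let D̂ be an η-sparse family of dyadic cubes contained in a fixed cube Q^w ⊂ R^{1+n}_+, with disjoint sets E_R ⊂ R, |E_R| ≥ η|R|. For each R ∈ D̂ let R^□ ⊂ Q̃^w be a measurable set with |R^□| ≈ |R| and R ∪ R^□ contained in the bounded enlargement Q̃^w of Q^w. Then for every g ≥ 0 supported in Q^w with ‖g‖_{L^{q'}} = 1 (1/q+1/q' = 1, 1 < q < ∞): ∑_{R ∈ D̂} (avg_R g)(avg_{R^□}|f|)|R| ≲ |Q^w|^{1/q} (avg_{Q̃^w} |f|^q)^{1/q}, with implicit constant depending only on η, q, n, and the comparability constants. -/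
open MeasureTheory Set
open Metric
open scoped ENNReal

noncomputable section

lemma lintegral_rpow_Ioo (T s : ℝ) (hT : 0 ≤ T) (hs : -1 < s) :
    ∫⁻ t in Ioo (0:ℝ) T, ENNReal.ofReal (t ^ s) = ENNReal.ofReal (T ^ (s+1) / (s+1)) := by
  have hs1 : 0 < s + 1 := by linarith
  have hInt : IntegrableOn (fun t : ℝ => t ^ s) (Ioo 0 T) volume := by
    have h := intervalIntegral.intervalIntegrable_rpow' (r := s) (a := 0) (b := T) hs
    rwa [intervalIntegrable_iff_integrableOn_Ioo_of_le hT] at h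
  rw [← ofReal_integral_eq_lintegral_ofReal hInt
      (((ae_restrict_iff' measurableSet_Ioo).2 (ae_of_all _ fun t ht =>
        Real.rpow_nonneg ht.1.le s)))]
  congr 1
  have h1 : ∫ t in Ioo (0:ℝ) T, t ^ s = ∫ t in (0:ℝ)..T, t ^ s := by
    rw [intervalIntegral.integral_of_le hT, integral_Ioc_eq_integral_Ioo]
  rw [h1, integral_rpow (Or.inl hs), Real.zero_rpow hs1.ne']
  ring

lemma layercake_pt {p : ℝ} (hp : 1 < p) {a : ℝ≥0∞} (ha : a ≠ ⊤) :
    a ^ p = ENNReal.ofReal p *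
      ∫⁻ t in Ioi (0:ℝ),
        ({u : ℝ | ENNReal.ofReal u < a}.indicator fun u => ENNReal.ofReal (u ^ (p-1))) t := by
  have hp0 : (0:ℝ) < p := by linarith
  rcases eq_or_ne a 0 with rfl | ha0
  · have hE : {u : ℝ | ENNReal.ofReal u < 0} = ∅ := by simp
    rw [hE]
    simp [ENNReal.zero_rpow_of_pos hp0]
  · have hT : 0 < a.toReal := ENNReal.toReal_pos ha0 ha
    have hset : {u : ℝ | ENNReal.ofReal u < a} = Iio a.toReal := by
      ext u
      simp only [mem_setOf_eq, mem_Iio]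
      rcases le_or_gt u 0 with hu | hu
      · have h0 : ENNReal.ofReal u = 0 := ENNReal.ofReal_eq_zero.2 hu
        simp [h0, pos_iff_ne_zero.2 ha0, lt_of_le_of_lt hu hT]
      · exact ENNReal.ofReal_lt_iff_lt_toReal hu.le ha
    rw [hset, lintegral_indicator measurableSet_Iio, Measure.restrict_restrict measurableSet_Iio,
      Set.Iio_inter_Ioi, lintegral_rpow_Ioo _ _ hT.le (by linarith)]
    rw [← ENNReal.ofReal_mul hp0.le]
    have : p * (a.toReal ^ (p - 1 + 1) / (p - 1 + 1)) = a.toReal ^ p := by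
      field_simp
      rw [sub_add_cancel, mul_div_cancel_left₀ _ hp0.ne']
    rw [this, ← ENNReal.ofReal_rpow_of_pos hT, ENNReal.ofReal_toReal ha]

lemma ball_scale (n : ℕ) (c : HSPt n) {r τ : ℝ} (hr : 0 ≤ r) (hτ : 0 ≤ τ) :
    volume (closedBall c (τ * r)) = ENNReal.ofReal (τ ^ (n+1)) * volume (closedBall c r) := by
  rw [Measure.addHaar_closedBall _ _ hr, Measure.addHaar_closedBall _ _ (mul_nonneg hτ hr)]
  rw [show Module.finrank ℝ (HSPt n) = n+1 by simp [HSPt]]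
  rw [mul_pow, ENNReal.ofReal_mul (pow_nonneg hτ _), mul_assoc]

lemma vitali_weak (n : ℕ) {ι : Type} [Countable ι] (c : ι → HSPt n) (r : ι → ℝ)
    (hr : ∀ i, 0 < r i) (rmax : ℝ) (hrmax : ∀ i, r i ≤ rmax)
    (S : Set ι) (h : HSPt n → ℝ≥0∞) (hm : Measurable h) (L : ℝ≥0∞)
    (hw : ∀ i ∈ S, L * volume (closedBall (c i) (r i)) ≤ ∫⁻ x in closedBall (c i) (r i), h x) :
    L * volume (⋃ i ∈ S, closedBall (c i) (r i)) ≤ ENNReal.ofReal (4 ^ (n+1)) * ∫⁻ x, h x := by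
  obtain ⟨u, huS, hdisj, hcov⟩ :=
    Vitali.exists_disjoint_subfamily_covering_enlargement_closedBall S c r rmax
      (fun i _ => hrmax i) 4 (by norm_num)
  have hsub : (⋃ i ∈ S, closedBall (c i) (r i)) ⊆ ⋃ i ∈ u, closedBall (c i) (4 * r i) := by
    refine iUnion₂_subset fun i hi => ?_
    obtain ⟨b, hb, hsub⟩ := hcov i hi
    exact hsub.trans (subset_iUnion₂ (s := fun i (_ : i ∈ u) => closedBall (c i) (4 * r i)) b hb)
  have h1 : volume (⋃ i ∈ S, closedBall (c i) (r i)) ≤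
      ENNReal.ofReal (4 ^ (n+1)) * ∑' (i : u), volume (closedBall (c i) (r i)) := by
    refine (measure_mono hsub).trans ?_
    refine (measure_biUnion_le volume u.to_countable _).trans ?_
    rw [← ENNReal.tsum_mul_left]
    exact ENNReal.tsum_le_tsum fun i =>
      le_of_eq (ball_scale n (c i) (hr i).le (by norm_num))
  have h2 : L * ∑' (i : u), volume (closedBall (c i) (r i)) ≤ ∫⁻ x, h x := by
    rw [← ENNReal.tsum_mul_left]
    have h3 : ∑' (i : u), L * volume (closedBall (c i) (r i)) ≤
        ∑' (i : u), ∫⁻ x in closedBall (c i) (r i), h x :=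
      ENNReal.tsum_le_tsum fun i => hw i (huS i.2)
    refine h3.trans ?_
    rw [← lintegral_iUnion (fun i : u => measurableSet_closedBall)
      (hdisj.subtype _ _) h]
    exact setLIntegral_le_lintegral _ _
  calc L * volume (⋃ i ∈ S, closedBall (c i) (r i))
      ≤ L * (ENNReal.ofReal (4 ^ (n+1)) * ∑' (i : u), volume (closedBall (c i) (r i))) := by
        exact mul_le_mul_right h1 L
    _ = ENNReal.ofReal (4 ^ (n+1)) * (L * ∑' (i : u), volume (closedBall (c i) (r i))) := by
        rw [mul_left_comm]
    _ ≤ ENNReal.ofReal (4 ^ (n+1)) * ∫⁻ x, h x := mul_le_mul_right h2 _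

lemma carleson_embedding (n : ℕ) (p η : ℝ) (hp : 1 < p) (hη : 0 < η) :
    ∃ K : ℝ≥0∞, 0 < K ∧ K ≠ ⊤ ∧
    ∀ (ι : Type) (_ : Countable ι) (c : ι → HSPt n) (r : ι → ℝ),
      (∀ i, 0 < r i) → ∀ rmax : ℝ, (∀ i, r i ≤ rmax) →
      ∀ E : ι → Set (HSPt n), (∀ i, MeasurableSet (E i)) →
      (∀ i, E i ⊆ closedBall (c i) (r i)) →
      Pairwise (Function.onFun Disjoint E) →
      (∀ i, ENNReal.ofReal η * volume (closedBall (c i) (r i)) ≤ volume (E i)) →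
      ∀ h : HSPt n → ℝ≥0∞, Measurable h → (∀ x, h x ≠ ⊤) →
      ∑' i, ((∫⁻ x in closedBall (c i) (r i), h x) / volume (closedBall (c i) (r i))) ^ p *
          volume (closedBall (c i) (r i))
        ≤ K * ∫⁻ x, h x ^ p := by
  have hp0 : (0:ℝ) < p := by linarith
  have hp1 : (0:ℝ) < p - 1 := by linarith
  have h2p : (0:ℝ) < 2 * 2 ^ (p-1) / (p-1) := by positivity
  refine ⟨ENNReal.ofReal η⁻¹ * ENNReal.ofReal p * ENNReal.ofReal (4 ^ (n+1)) *
      ENNReal.ofReal (2 * 2 ^ (p-1) / (p-1)), ?_, ?_, ?_⟩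
  · refine ENNReal.mul_pos (mul_ne_zero (mul_ne_zero ?_ ?_) ?_) ?_ <;>
      exact (ENNReal.ofReal_pos.2 (by positivity)).ne'
  · exact ENNReal.mul_ne_top (ENNReal.mul_ne_top (ENNReal.mul_ne_top
      ENNReal.ofReal_ne_top ENNReal.ofReal_ne_top) ENNReal.ofReal_ne_top) ENNReal.ofReal_ne_top
  intro ι _ c r hr rmax hrmax E hEm hER hEdisj hsparse h hmeas hfin
  set R : ι → Set (HSPt n) := fun i => closedBall (c i) (r i) with hR_def
  set m : ι → ℝ≥0∞ := fun i => volume (R i) with hm_def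
  have hm0 : ∀ i, m i ≠ 0 := fun i => (measure_closedBall_pos _ _ (hr i)).ne'
  have hmtop : ∀ i, m i ≠ ⊤ := fun i => (isCompact_closedBall _ _).measure_lt_top.ne
  have hRm : ∀ i, MeasurableSet (R i) := fun i => measurableSet_closedBall
  by_cases hIfin : ∫⁻ x, h x ^ p = ⊤
  · rw [hIfin, ENNReal.mul_top]
    · exact le_top
    · refine mul_ne_zero (mul_ne_zero (mul_ne_zero ?_ ?_) ?_) ?_ <;>
        exact (ENNReal.ofReal_pos.2 (by positivity)).ne'
  set A : ι → ℝ≥0∞ := fun i => ∫⁻ x in R i, h x with hA_def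
  set a : ι → ℝ≥0∞ := fun i => A i / m i with ha_def
  -- finiteness of the ball averages
  have hAfin : ∀ i, A i ≠ ⊤ := by
    intro i
    have hconj : p.HolderConjugate p.conjExponent := Real.HolderConjugate.conjExponent hp
    have hH := ENNReal.lintegral_mul_le_Lp_mul_Lq (volume.restrict (R i)) hconj
      hmeas.aemeasurable (aemeasurable_const (b := (1:ℝ≥0∞)))
    simp only [Pi.mul_apply, mul_one, ENNReal.one_rpow, lintegral_const,
      Measure.restrict_apply MeasurableSet.univ, univ_inter, one_mul] at hH
    refine ne_top_of_le_ne_top ?_ hH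
    refine ENNReal.mul_ne_top ?_ ?_
    · exact (ENNReal.rpow_lt_top_of_nonneg (by positivity)
        (ne_top_of_le_ne_top hIfin (setLIntegral_le_lintegral _ _))).ne
    · exact (ENNReal.rpow_lt_top_of_nonneg hconj.symm.one_div_nonneg (hmtop i)).ne
  have hafin : ∀ i, a i ≠ ⊤ := fun i => (ENNReal.div_lt_top (hAfin i) (hm0 i)).ne
  have hEfin : ∀ i, volume (E i) ≠ ⊤ :=
    fun i => (lt_of_le_of_lt (measure_mono (hER i)) (hmtop i).lt_top).ne
  -- step 1 : replace m i by volume (E i)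
  have step1 : ∑' i, a i ^ p * m i ≤
      ENNReal.ofReal η⁻¹ * ∑' i, a i ^ p * volume (E i) := by
    rw [← ENNReal.tsum_mul_left]
    refine ENNReal.tsum_le_tsum fun i => ?_
    have hmi : m i ≤ ENNReal.ofReal η⁻¹ * volume (E i) := by
      have h1 : m i = (ENNReal.ofReal η)⁻¹ * (ENNReal.ofReal η * m i) := by
        rw [← mul_assoc, ENNReal.inv_mul_cancel (ENNReal.ofReal_pos.2 hη).ne'
          ENNReal.ofReal_ne_top, one_mul]
      rw [ENNReal.ofReal_inv_of_pos hη, h1]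
      exact mul_le_mul_right (hsparse i) _
    calc a i ^ p * m i ≤ a i ^ p * (ENNReal.ofReal η⁻¹ * volume (E i)) :=
          mul_le_mul_right hmi _
      _ = ENNReal.ofReal η⁻¹ * (a i ^ p * volume (E i)) := by ring
  -- layer cake
  set φ : ι → ℝ → ℝ≥0∞ := fun i t =>
    ({u : ℝ | ENNReal.ofReal u < a i}.indicator (fun u => ENNReal.ofReal (u ^ (p-1))) t) *
      volume (E i) with hφ_def
  have hφmeas : ∀ i, Measurable (φ i) := by
    intro i
    refine Measurable.mul_const ?_ _
    exact Measurable.indicator (measurable_id.pow_const _).ennreal_ofReal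
      (ENNReal.measurable_ofReal measurableSet_Iio)
  have step2 : ∀ i, a i ^ p * volume (E i) =
      ENNReal.ofReal p * ∫⁻ t in Ioi (0:ℝ), φ i t := by
    intro i
    rw [layercake_pt hp (hafin i), mul_assoc]
    congr 1
    rw [← lintegral_mul_const' (volume (E i)) _ (hEfin i)]
  have step3 : ∑' i, a i ^ p * volume (E i) =
      ENNReal.ofReal p * ∫⁻ t in Ioi (0:ℝ), ∑' i, φ i t := by
    simp_rw [step2]
    rw [ENNReal.tsum_mul_left, lintegral_tsum fun i => (hφmeas i).aemeasurable]
  -- the cut function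
  set hcut : ℝ → HSPt n → ℝ≥0∞ := fun t x =>
    if ENNReal.ofReal (t/2) < h x then h x else 0 with hcut_def
  have hcutmeas : ∀ t, Measurable (hcut t) := by
    intro t
    exact Measurable.ite (measurableSet_lt measurable_const hmeas) hmeas measurable_const
  -- step 4 : weak type bound
  have step4 : ∀ t : ℝ, 0 < t → ∑' i, φ i t ≤
      ENNReal.ofReal (4^(n+1)) * (ENNReal.ofReal (2 * t ^ (p-2)) * ∫⁻ x, hcut t x) := by
    intro t ht
    set S : Set ι := {i | ENNReal.ofReal t < a i} with hS_def
    have hφt : ∀ i, φ i t =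
        ENNReal.ofReal (t ^ (p-1)) * S.indicator (fun i => volume (E i)) i := by
      intro i
      by_cases hit : ENNReal.ofReal t < a i <;>
        simp [hφ_def, Set.indicator_apply, hit, hS_def, mul_comm]
    have hW : ∑' i, φ i t =
        ENNReal.ofReal (t ^ (p-1)) * volume (⋃ i ∈ S, E i) := by
      simp_rw [hφt]
      rw [ENNReal.tsum_mul_left, ← tsum_subtype,
        measure_biUnion S.to_countable (hEdisj.set_pairwise S) (fun i _ => hEm i)]
    -- weak hypothesis for vitali
    have hw : ∀ i ∈ S, ENNReal.ofReal (t/2) * m i ≤ ∫⁻ x in R i, hcut t x := by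
      intro i hi
      have hlt : ENNReal.ofReal t * m i < A i :=
        (ENNReal.lt_div_iff_mul_lt (Or.inl (hm0 i)) (Or.inl (hmtop i))).1 hi
      have hsplit : A i ≤ ENNReal.ofReal (t/2) * m i + ∫⁻ x in R i, hcut t x := by
        have hpt : ∀ x, h x ≤ ENNReal.ofReal (t/2) + hcut t x := by
          intro x
          by_cases hx : ENNReal.ofReal (t/2) < h x
          · simp only [hcut_def, if_pos hx]
            exact le_add_self
          · simp only [hcut_def, if_neg hx, add_zero]
            exact not_lt.1 hx
        calc A i ≤ ∫⁻ x in R i, (ENNReal.ofReal (t/2) + hcut t x) :=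
              lintegral_mono hpt
          _ = ENNReal.ofReal (t/2) * m i + ∫⁻ x in R i, hcut t x := by
              rw [lintegral_add_left measurable_const, setLIntegral_const]
      have ht2 : ENNReal.ofReal t * m i =
          ENNReal.ofReal (t/2) * m i + ENNReal.ofReal (t/2) * m i := by
        rw [← add_mul, ← ENNReal.ofReal_add (by positivity) (by positivity), add_halves]
      have := lt_of_lt_of_le hlt hsplit
      rw [ht2] at this
      exact le_of_lt ((ENNReal.add_lt_add_iff_left
        (ENNReal.mul_ne_top ENNReal.ofReal_ne_top (hmtop i))).1 this)
    have hvit := vitali_weak n c r hr rmax hrmax S (hcut t) (hcutmeas t)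
      (ENNReal.ofReal (t/2)) hw
    have hWle : volume (⋃ i ∈ S, E i) ≤
        ENNReal.ofReal ((t/2)⁻¹) * (ENNReal.ofReal (4^(n+1)) * ∫⁻ x, hcut t x) := by
      have hmono : volume (⋃ i ∈ S, E i) ≤ volume (⋃ i ∈ S, R i) :=
        measure_mono (iUnion₂_mono fun i _ => hER i)
      have h1 : volume (⋃ i ∈ S, R i) =
          ENNReal.ofReal ((t/2)⁻¹) * (ENNReal.ofReal (t/2) * volume (⋃ i ∈ S, R i)) := by
        rw [← mul_assoc, ← ENNReal.ofReal_mul (by positivity), inv_mul_cancel₀ (by positivity),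
          ENNReal.ofReal_one, one_mul]
      refine hmono.trans ?_
      rw [h1]
      exact mul_le_mul_right hvit _
    rw [hW]
    calc ENNReal.ofReal (t ^ (p-1)) * volume (⋃ i ∈ S, E i)
        ≤ ENNReal.ofReal (t ^ (p-1)) *
          (ENNReal.ofReal ((t/2)⁻¹) * (ENNReal.ofReal (4^(n+1)) * ∫⁻ x, hcut t x)) :=
          mul_le_mul_right hWle _
      _ = ENNReal.ofReal (4^(n+1)) *
          (ENNReal.ofReal (t ^ (p-1)) * ENNReal.ofReal ((t/2)⁻¹) * ∫⁻ x, hcut t x) := by ring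
      _ = ENNReal.ofReal (4^(n+1)) * (ENNReal.ofReal (2 * t ^ (p-2)) * ∫⁻ x, hcut t x) := by
          congr 2
          rw [← ENNReal.ofReal_mul (by positivity)]
          congr 1
          have htp : t ^ (p-2) = t ^ (p-1) / t := by
            rw [show p - 2 = (p-1) - 1 by ring, Real.rpow_sub ht, Real.rpow_one]
          rw [htp]
          field_simp
  -- step 5 : integrate the weak bound
  have step5 : ∫⁻ t in Ioi (0:ℝ), ∑' i, φ i t ≤
      ENNReal.ofReal (4^(n+1)) * ∫⁻ t in Ioi (0:ℝ),
        ENNReal.ofReal (2 * t ^ (p-2)) * ∫⁻ x, hcut t x := by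
    rw [← lintegral_const_mul' _ _ ENNReal.ofReal_ne_top]
    exact lintegral_mono_ae ((ae_restrict_iff' measurableSet_Ioi).2
      (ae_of_all _ fun t ht => step4 t ht))
  -- step 6 : Tonelli
  have hprodmeas : AEMeasurable (fun q : ℝ × HSPt n =>
      ENNReal.ofReal (2 * q.1 ^ (p-2)) * hcut q.1 q.2)
      ((volume.restrict (Ioi (0:ℝ))).prod volume) := by
    apply Measurable.aemeasurable
    refine Measurable.mul ?_ ?_
    · exact ((measurable_fst.pow_const _).const_mul 2).ennreal_ofReal
    · simp only [hcut_def]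
      exact Measurable.ite (measurableSet_lt ((measurable_fst.div_const 2).ennreal_ofReal)
        (hmeas.comp measurable_snd)) (hmeas.comp measurable_snd) measurable_const
  have step6 : ∫⁻ t in Ioi (0:ℝ), ENNReal.ofReal (2 * t ^ (p-2)) * ∫⁻ x, hcut t x
      = ∫⁻ x, ∫⁻ t in Ioi (0:ℝ), ENNReal.ofReal (2 * t ^ (p-2)) * hcut t x := by
    have h1 : ∀ t : ℝ, ENNReal.ofReal (2 * t ^ (p-2)) * ∫⁻ x, hcut t x
        = ∫⁻ x, ENNReal.ofReal (2 * t ^ (p-2)) * hcut t x := fun t =>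
      (lintegral_const_mul' _ _ ENNReal.ofReal_ne_top).symm
    simp_rw [h1]
    exact lintegral_lintegral_swap hprodmeas
  -- step 7 : pointwise inner integral bound
  have step7 : ∀ x, ∫⁻ t in Ioi (0:ℝ), ENNReal.ofReal (2 * t ^ (p-2)) * hcut t x
      ≤ ENNReal.ofReal (2 * 2 ^ (p-1) / (p-1)) * h x ^ p := by
    intro x
    by_cases hx0 : h x = 0
    · have hz : ∀ t : ℝ, ENNReal.ofReal (2 * t ^ (p-2)) * hcut t x = 0 := by
        intro t
        simp [hcut_def, hx0]
      simp_rw [hz]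
      simp
    · have hxT : 0 < (h x).toReal := ENNReal.toReal_pos hx0 (hfin x)
      set T : ℝ := 2 * (h x).toReal with hT_def
      have hTpos : 0 < T := by positivity
      have hiff : ∀ t : ℝ, (ENNReal.ofReal (t/2) < h x) ↔ t < T := by
        intro t
        rcases le_or_gt t 0 with htn | htp
        · have h0 : ENNReal.ofReal (t/2) = 0 := ENNReal.ofReal_eq_zero.2 (by linarith)
          simp only [h0]
          simp [pos_iff_ne_zero.2 hx0, lt_of_le_of_lt htn hTpos]
        · rw [ENNReal.ofReal_lt_iff_lt_toReal (by positivity) (hfin x)]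
          constructor <;> intro hh <;> [linarith; linarith]
      have hind : ∀ t : ℝ, ENNReal.ofReal (2 * t ^ (p-2)) * hcut t x
          = (Iio T).indicator (fun t => ENNReal.ofReal (2 * t ^ (p-2))) t * h x := by
        intro t
        by_cases hcond : t < T
        · rw [hcut_def]
          simp only []
          rw [if_pos ((hiff t).2 hcond), Set.indicator_of_mem (show t ∈ Iio T from hcond)]
        · rw [hcut_def]
          simp only []
          rw [if_neg (fun hy => hcond ((hiff t).1 hy)),
            Set.indicator_of_notMem (show t ∉ Iio T from hcond), mul_zero, zero_mul]
      have hpow : h x ^ (p-1) * h x = h x ^ p := by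
        calc h x ^ (p-1) * h x = h x ^ (p-1) * h x ^ (1:ℝ) := by rw [ENNReal.rpow_one]
          _ = h x ^ ((p-1)+1) := (ENNReal.rpow_add _ _ hx0 (hfin x)).symm
          _ = h x ^ p := by norm_num
      have hcalc : ∫⁻ t in Ioi (0:ℝ), ENNReal.ofReal (2 * t ^ (p-2)) * hcut t x
          = ENNReal.ofReal (2 * 2 ^ (p-1) / (p-1)) * h x ^ p := by
        calc ∫⁻ t in Ioi (0:ℝ), ENNReal.ofReal (2 * t ^ (p-2)) * hcut t x
            = (∫⁻ t in Ioi (0:ℝ),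
                (Iio T).indicator (fun t => ENNReal.ofReal (2 * t ^ (p-2))) t) * h x := by
              simp_rw [hind]
              rw [lintegral_mul_const' _ _ (hfin x)]
          _ = (∫⁻ t in Ioo (0:ℝ) T, ENNReal.ofReal (2 * t ^ (p-2))) * h x := by
              rw [lintegral_indicator measurableSet_Iio,
                Measure.restrict_restrict measurableSet_Iio, Set.Iio_inter_Ioi]
          _ = (ENNReal.ofReal 2 * ENNReal.ofReal (T ^ (p-1) / (p-1))) * h x := by
              have h2 : ∀ t : ℝ, ENNReal.ofReal (2 * t ^ (p-2)) =
                  ENNReal.ofReal 2 * ENNReal.ofReal (t ^ (p-2)) := fun t =>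
                ENNReal.ofReal_mul (by norm_num)
              simp_rw [h2]
              rw [lintegral_const_mul' _ _ ENNReal.ofReal_ne_top,
                lintegral_rpow_Ioo T (p-2) hTpos.le (by linarith),
                show p - 2 + 1 = p - 1 by ring]
          _ = ENNReal.ofReal (2 * 2 ^ (p-1) / (p-1)) * h x ^ p := by
              have hxTval : ENNReal.ofReal (T ^ (p-1) / (p-1)) =
                  ENNReal.ofReal (2 ^ (p-1) / (p-1)) * h x ^ (p-1) := by
                rw [hT_def, Real.mul_rpow (by norm_num) ENNReal.toReal_nonneg,
                  show (2:ℝ) ^ (p-1) * (h x).toReal ^ (p-1) / (p-1) =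
                    (2 ^ (p-1) / (p-1)) * (h x).toReal ^ (p-1) by ring,
                  ENNReal.ofReal_mul (by positivity),
                  ← ENNReal.ofReal_rpow_of_pos hxT, ENNReal.ofReal_toReal (hfin x)]
              rw [hxTval]
              calc ENNReal.ofReal 2 * (ENNReal.ofReal (2 ^ (p-1) / (p-1)) * h x ^ (p-1)) * h x
                  = (ENNReal.ofReal 2 * ENNReal.ofReal (2 ^ (p-1) / (p-1))) *
                      (h x ^ (p-1) * h x) := by ring
                _ = ENNReal.ofReal (2 * 2 ^ (p-1) / (p-1)) * h x ^ p := by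
                    rw [← ENNReal.ofReal_mul (by norm_num), hpow, mul_div_assoc]
      exact le_of_eq hcalc
  -- assembly
  have final : ∑' i, a i ^ p * m i ≤
      (ENNReal.ofReal η⁻¹ * ENNReal.ofReal p * ENNReal.ofReal (4 ^ (n+1)) *
        ENNReal.ofReal (2 * 2 ^ (p-1) / (p-1))) * ∫⁻ x, h x ^ p := by
    calc ∑' i, a i ^ p * m i
        ≤ ENNReal.ofReal η⁻¹ * ∑' i, a i ^ p * volume (E i) := step1
      _ = ENNReal.ofReal η⁻¹ * (ENNReal.ofReal p * ∫⁻ t in Ioi (0:ℝ), ∑' i, φ i t) := by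
          rw [step3]
      _ ≤ ENNReal.ofReal η⁻¹ * (ENNReal.ofReal p * (ENNReal.ofReal (4 ^ (n+1)) *
            ∫⁻ t in Ioi (0:ℝ), ENNReal.ofReal (2 * t ^ (p-2)) * ∫⁻ x, hcut t x)) :=
          mul_le_mul_right (mul_le_mul_right step5 _) _
      _ = ENNReal.ofReal η⁻¹ * ENNReal.ofReal p * ENNReal.ofReal (4 ^ (n+1)) *
            ∫⁻ x, ∫⁻ t in Ioi (0:ℝ), ENNReal.ofReal (2 * t ^ (p-2)) * hcut t x := by
          rw [step6]
          ring
      _ ≤ ENNReal.ofReal η⁻¹ * ENNReal.ofReal p * ENNReal.ofReal (4 ^ (n+1)) *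
            (ENNReal.ofReal (2 * 2 ^ (p-1) / (p-1)) * ∫⁻ x, h x ^ p) := by
          refine mul_le_mul_right ?_ _
          calc ∫⁻ x, ∫⁻ t in Ioi (0:ℝ), ENNReal.ofReal (2 * t ^ (p-2)) * hcut t x
              ≤ ∫⁻ x, ENNReal.ofReal (2 * 2 ^ (p-1) / (p-1)) * h x ^ p :=
                lintegral_mono step7
            _ = _ := lintegral_const_mul' _ _ ENNReal.ofReal_ne_top
      _ = _ := by ring
  have hgoal := final
  simp only [ha_def, hA_def, hm_def, hR_def] at hgoal
  exact hgoal

lemma radius_le {n : ℕ} {c c₀ : HSPt n} {ρ r₀ : ℝ} (hρ : 0 < ρ)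
    (hsub : closedBall c ρ ⊆ closedBall c₀ r₀) : ρ ≤ r₀ := by
  set v : HSPt n := fun _ => (1:ℝ) with hv_def
  have hv : ‖v‖ = 1 := by
    rw [hv_def, pi_norm_const, norm_one]
  have h1 : c + ρ • v ∈ closedBall c ρ := by
    rw [mem_closedBall, dist_eq_norm]
    simp only [add_sub_cancel_left]
    rw [norm_smul, hv, Real.norm_eq_abs, abs_of_pos hρ, mul_one]
  have h2 : c - ρ • v ∈ closedBall c ρ := by
    rw [mem_closedBall, dist_eq_norm]
    simp only [sub_sub_cancel_left]
    rw [norm_neg, norm_smul, hv, Real.norm_eq_abs, abs_of_pos hρ, mul_one]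
  have hd : dist (c + ρ • v) (c - ρ • v) = 2 * ρ := by
    rw [dist_eq_norm, show (c + ρ • v) - (c - ρ • v) = (2 * ρ) • v by
      rw [two_mul, add_smul]; abel]
    rw [norm_smul, hv, Real.norm_eq_abs, abs_of_pos (by linarith), mul_one]
  have ht := dist_triangle (c + ρ • v) c₀ (c - ρ • v)
  have hb1 : dist (c + ρ • v) c₀ ≤ r₀ := mem_closedBall.1 (hsub h1)
  have hb2 : dist c₀ (c - ρ • v) ≤ r₀ := by
    rw [dist_comm]; exact mem_closedBall.1 (hsub h2)
  rw [hd] at ht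
  linarith

lemma tsum_holder {ι : Type} [Countable ι] (q q' : ℝ) (hconj : q'.HolderConjugate q)
    (u v : ι → ℝ≥0∞) :
    ∑' i, u i * v i ≤ (∑' i, u i ^ q') ^ (1/q') * (∑' i, v i ^ q) ^ (1/q) := by
  letI : MeasurableSpace ι := ⊤
  haveI : MeasurableSingletonClass ι := ⟨fun _ => trivial⟩
  rw [← lintegral_count, ← lintegral_count, ← lintegral_count]
  exact ENNReal.lintegral_mul_le_Lp_mul_Lq _ hconj measurable_from_top.aemeasurable
    measurable_from_top.aemeasurable

lemma main_sum_le {ι : Type} [Countable ι] (q q' : ℝ) (hconj : q'.HolderConjugate q)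
    (a b m : ι → ℝ≥0∞) (hm0 : ∀ i, m i ≠ 0) (hmtop : ∀ i, m i ≠ ⊤) :
    ∑' i, a i * b i * m i ≤
      (∑' i, a i ^ q' * m i) ^ (1/q') * (∑' i, b i ^ q * m i) ^ (1/q) := by
  have hq'0 : (0:ℝ) < q' := hconj.pos
  have hq0 : (0:ℝ) < q := hconj.symm.pos
  have hsum : 1/q' + 1/q = 1 := by
    rw [one_div, one_div]; exact hconj.inv_add_inv_eq_one
  have key : ∀ i, a i * b i * m i = (a i * m i ^ (1/q')) * (b i * m i ^ (1/q)) := by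
    intro i
    have hm : m i ^ (1/q') * m i ^ (1/q) = m i := by
      rw [← ENNReal.rpow_add _ _ (hm0 i) (hmtop i), hsum, ENNReal.rpow_one]
    calc a i * b i * m i = (a i * b i) * (m i ^ (1/q') * m i ^ (1/q)) := by rw [hm]
      _ = (a i * m i ^ (1/q')) * (b i * m i ^ (1/q)) := by ring
  have hu : ∀ i, (a i * m i ^ (1/q')) ^ q' = a i ^ q' * m i := by
    intro i
    rw [ENNReal.mul_rpow_of_nonneg _ _ hq'0.le, ← ENNReal.rpow_mul,
      one_div_mul_cancel hq'0.ne', ENNReal.rpow_one]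
  have hv : ∀ i, (b i * m i ^ (1/q)) ^ q = b i ^ q * m i := by
    intro i
    rw [ENNReal.mul_rpow_of_nonneg _ _ hq0.le, ← ENNReal.rpow_mul,
      one_div_mul_cancel hq0.ne', ENNReal.rpow_one]
  calc ∑' i, a i * b i * m i
      = ∑' i, (a i * m i ^ (1/q')) * (b i * m i ^ (1/q)) := tsum_congr key
    _ ≤ (∑' i, (a i * m i ^ (1/q')) ^ q') ^ (1/q') *
        (∑' i, (b i * m i ^ (1/q)) ^ q) ^ (1/q) := tsum_holder q q' hconj _ _
    _ = (∑' i, a i ^ q' * m i) ^ (1/q') * (∑' i, b i ^ q * m i) ^ (1/q) := by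
        simp_rw [hu, hv]

/-- Sparse duality estimate with shifted averages: let `(R i) = closedBall (c i) (r i)` be an
`η`-sparse family of cubes contained in a cube `Q^w`, with disjoint measurable `E i ⊆ R i`,
`|E i| ≥ η |R i|`. For each `i` let `B i` (the set `R^□`) be a measurable set contained in the
bounded enlargement `Q̃^w` of `Q^w` and in the `c₂`-dilate of `R i`, with `|B i| ≈ |R i|`.
Then for every `g ≥ 0` supported in `Q^w` with `‖g‖_{L^{q'}} = 1`,
`∑_i (avg_{R i} g)(avg_{B i}|f|)|R i| ≤ C |Q^w|^{1/q} (avg_{Q̃^w} |f|^q)^{1/q}`,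
with `C` depending only on `η`, `q`, `n` and the comparability constant `c₂`. -/
theorem sparse_duality_estimate (n : ℕ) (q q' η c₂ : ℝ)
    (hq : 1 < q) (hqq' : 1 / q + 1 / q' = 1)
    (hη0 : 0 < η) (hη1 : η ≤ 1) (hc₂ : 1 ≤ c₂) :
    ∃ C : ℝ, 0 < C ∧
      ∀ (ι : Type) (_ : Countable ι)
        (c : ι → HSPt n) (r : ι → ℝ) (_ : ∀ i, 0 < r i)
        (c₀ c₁ : HSPt n) (r₀ r₁ : ℝ), 0 < r₀ → 0 < r₁ →
        Metric.closedBall c₀ r₀ ⊆ Metric.closedBall c₁ r₁ →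
        volume (Metric.closedBall c₁ r₁ : Set (HSPt n)) ≤
          ENNReal.ofReal c₂ * volume (Metric.closedBall c₀ r₀ : Set (HSPt n)) →
        ∀ E B : ι → Set (HSPt n),
        (∀ i, Metric.closedBall (c i) (r i) ⊆ Metric.closedBall c₀ r₀) →
        (∀ i, MeasurableSet (E i)) →
        (∀ i, E i ⊆ Metric.closedBall (c i) (r i)) →
        Pairwise (Function.onFun Disjoint E) →
        (∀ i, ENNReal.ofReal η * volume (Metric.closedBall (c i) (r i) : Set (HSPt n)) ≤
          volume (E i)) →
        (∀ i, MeasurableSet (B i)) →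
        (∀ i, B i ⊆ Metric.closedBall c₁ r₁) →
        (∀ i, B i ⊆ Metric.closedBall (c i) (c₂ * r i)) →
        (∀ i, volume (Metric.closedBall (c i) (r i) : Set (HSPt n)) ≤
          ENNReal.ofReal c₂ * volume (B i)) →
        (∀ i, volume (B i) ≤
          ENNReal.ofReal c₂ * volume (Metric.closedBall (c i) (r i) : Set (HSPt n))) →
        ∀ g f : HSPt n → ℝ, Measurable g → (∀ x, 0 ≤ g x) →
        (∀ x ∉ Metric.closedBall c₀ r₀, g x = 0) →
        (∫⁻ x, ENNReal.ofReal (g x) ^ q') = 1 →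
        Measurable f →
        (∑' i,
            ((∫⁻ x in Metric.closedBall (c i) (r i), ENNReal.ofReal (g x)) /
              volume (Metric.closedBall (c i) (r i) : Set (HSPt n))) *
            ((∫⁻ y in B i, ENNReal.ofReal |f y|) / volume (B i)) *
            volume (Metric.closedBall (c i) (r i) : Set (HSPt n)))
          ≤ ENNReal.ofReal C *
              volume (Metric.closedBall c₀ r₀ : Set (HSPt n)) ^ (1 / q) *
              ((∫⁻ y in Metric.closedBall c₁ r₁, ENNReal.ofReal |f y| ^ q) /
                volume (Metric.closedBall c₁ r₁ : Set (HSPt n))) ^ (1 / q) := by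
  have hq0 : (0:ℝ) < q := by linarith
  have h1q : (0:ℝ) < 1/q := by positivity
  have h1q1 : 1/q < 1 := by rw [div_lt_one hq0]; exact hq
  have h1q' : 1/q' = 1 - 1/q := by linarith
  have hq'pos : (0:ℝ) < 1/q' := by rw [h1q']; linarith
  have hq'0 : (0:ℝ) < q' := one_div_pos.1 hq'pos
  have hq'1 : 1 < q' := by
    have hlt : 1/q' < 1 := by rw [h1q']; linarith
    rwa [div_lt_one hq'0] at hlt
  have hconj : q'.HolderConjugate q := ⟨by rw [inv_eq_one_div, inv_eq_one_div, inv_one]; linarith, hq'0, hq0⟩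
  have hc₂0 : (0:ℝ) < c₂ := by linarith
  obtain ⟨KA, hKA0, hKAtop, hcarlA⟩ := carleson_embedding n q' η hq'1 hη0
  obtain ⟨KB, hKB0, hKBtop, hcarlB⟩ :=
    carleson_embedding n q (η / c₂ ^ (n+1)) hq (by positivity)
  set K : ℝ≥0∞ := KA ^ (1/q') * ((ENNReal.ofReal (c₂ ^ (n+2))) ^ q * KB) ^ (1/q) *
    (ENNReal.ofReal c₂) ^ (1/q) with hK_def
  have hKtop : K ≠ ⊤ := by
    refine ENNReal.mul_ne_top (ENNReal.mul_ne_top ?_ ?_) ?_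
    · exact ENNReal.rpow_ne_top_of_nonneg hq'pos.le hKAtop
    · exact ENNReal.rpow_ne_top_of_nonneg h1q.le
        (ENNReal.mul_ne_top (ENNReal.rpow_ne_top_of_nonneg hq0.le ENNReal.ofReal_ne_top) hKBtop)
    · exact ENNReal.rpow_ne_top_of_nonneg h1q.le ENNReal.ofReal_ne_top
  refine ⟨K.toReal + 1, by positivity, ?_⟩
  intro ι hι c r hr c₀ c₁ r₀ r₁ hr₀ hr₁ hQQt hQtQ E B hRQ hEm hEsub hEdisj hsparse
    hBm hBQt hBR' hRB hBR g f hg hgpos hgsupp hgnorm hf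
  haveI := hι
  have hri : ∀ i, r i ≤ r₀ := fun i => radius_le (hr i) (hRQ i)
  have hm0 : ∀ i, volume (closedBall (c i) (r i)) ≠ 0 :=
    fun i => (measure_closedBall_pos _ _ (hr i)).ne'
  have hmtop : ∀ i, volume (closedBall (c i) (r i)) ≠ ⊤ :=
    fun i => (isCompact_closedBall _ _).measure_lt_top.ne
  set hh : HSPt n → ℝ≥0∞ := (closedBall c₁ r₁).indicator (fun y => ENNReal.ofReal |f y|)
    with hh_def
  have hhmeas : Measurable hh :=
    (hf.abs.ennreal_ofReal).indicator measurableSet_closedBall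
  have hhfin : ∀ x, hh x ≠ ⊤ := by
    intro x
    rw [hh_def]
    by_cases hx : x ∈ closedBall c₁ r₁
    · rw [Set.indicator_of_mem hx]; exact ENNReal.ofReal_ne_top
    · rw [Set.indicator_of_notMem hx]; exact ENNReal.zero_ne_top
  -- part A : the g-sum
  have hA_le : ∑' i, ((∫⁻ x in closedBall (c i) (r i), ENNReal.ofReal (g x)) /
      volume (closedBall (c i) (r i))) ^ q' * volume (closedBall (c i) (r i)) ≤ KA := by
    have hcA := hcarlA ι hι c r hr r₀ hri E hEm hEsub hEdisj hsparse
      (fun x => ENNReal.ofReal (g x)) hg.ennreal_ofReal (fun x => ENNReal.ofReal_ne_top)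
    rwa [hgnorm, mul_one] at hcA
  -- part B : the f-sum
  have hB_le : ∑' i, ((∫⁻ y in B i, ENNReal.ofReal |f y|) / volume (B i)) ^ q *
      volume (closedBall (c i) (r i)) ≤
      (ENNReal.ofReal (c₂ ^ (n+2))) ^ q *
        (KB * ∫⁻ y in closedBall c₁ r₁, ENNReal.ofReal |f y| ^ q) := by
    have hB0 : ∀ i, volume (B i) ≠ 0 := by
      intro i heq
      apply hm0 i
      have h1 := hRB i
      rw [heq, mul_zero] at h1
      exact le_zero_iff.1 h1
    -- pointwise bound on the B-average
    have hbound : ∀ i, (∫⁻ y in B i, ENNReal.ofReal |f y|) / volume (B i) ≤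
        ENNReal.ofReal (c₂ ^ (n+2)) * ((∫⁻ x in closedBall (c i) (c₂ * r i), hh x) /
          volume (closedBall (c i) (c₂ * r i))) := by
      intro i
      have hIB : ∫⁻ y in B i, ENNReal.ofReal |f y| = ∫⁻ y in B i, hh y := by
        refine setLIntegral_congr_fun (hBm i) (fun y hy => ?_)
        rw [hh_def, Set.indicator_of_mem (hBQt i hy)]
      have hIB2 : ∫⁻ y in B i, hh y ≤ ∫⁻ x in closedBall (c i) (c₂ * r i), hh x :=
        lintegral_mono_set (hBR' i)
      have hscale : volume (closedBall (c i) (c₂ * r i)) =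
          ENNReal.ofReal (c₂ ^ (n+1)) * volume (closedBall (c i) (r i)) :=
        ball_scale n (c i) (hr i).le hc₂0.le
      have hinvB : (volume (B i))⁻¹ ≤
          ENNReal.ofReal c₂ * (volume (closedBall (c i) (r i)))⁻¹ := by
        have h1 : (ENNReal.ofReal c₂ * volume (B i))⁻¹ ≤
            (volume (closedBall (c i) (r i)))⁻¹ := ENNReal.inv_le_inv' (hRB i)
        rw [ENNReal.mul_inv (Or.inl (ENNReal.ofReal_pos.2 hc₂0).ne') (Or.inl
          ENNReal.ofReal_ne_top)] at h1
        calc (volume (B i))⁻¹ =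
            ENNReal.ofReal c₂ * ((ENNReal.ofReal c₂)⁻¹ * (volume (B i))⁻¹) := by
              rw [← mul_assoc, ENNReal.mul_inv_cancel (ENNReal.ofReal_pos.2 hc₂0).ne'
                ENNReal.ofReal_ne_top, one_mul]
          _ ≤ ENNReal.ofReal c₂ * (volume (closedBall (c i) (r i)))⁻¹ :=
              mul_le_mul_right h1 _
      have hinvm : (volume (closedBall (c i) (r i)))⁻¹ =
          ENNReal.ofReal (c₂ ^ (n+1)) * (volume (closedBall (c i) (c₂ * r i)))⁻¹ := by
        rw [hscale, ENNReal.mul_inv (Or.inl (ENNReal.ofReal_pos.2 (by positivity)).ne')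
          (Or.inl ENNReal.ofReal_ne_top), ← mul_assoc,
          ENNReal.mul_inv_cancel (ENNReal.ofReal_pos.2 (by positivity)).ne'
            ENNReal.ofReal_ne_top, one_mul]
      calc (∫⁻ y in B i, ENNReal.ofReal |f y|) / volume (B i)
          = (∫⁻ y in B i, hh y) * (volume (B i))⁻¹ := by
            rw [hIB, div_eq_mul_inv]
        _ ≤ (∫⁻ x in closedBall (c i) (c₂ * r i), hh x) *
              (ENNReal.ofReal c₂ * (volume (closedBall (c i) (r i)))⁻¹) :=
            mul_le_mul' hIB2 hinvB
        _ = ENNReal.ofReal (c₂ ^ (n+2)) * ((∫⁻ x in closedBall (c i) (c₂ * r i), hh x) /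
              volume (closedBall (c i) (c₂ * r i))) := by
            rw [hinvm, div_eq_mul_inv,
              show ENNReal.ofReal c₂ * (ENNReal.ofReal (c₂ ^ (n+1)) *
                  (volume (closedBall (c i) (c₂ * r i)))⁻¹) =
                (ENNReal.ofReal c₂ * ENNReal.ofReal (c₂ ^ (n+1))) *
                  (volume (closedBall (c i) (c₂ * r i)))⁻¹ from by ring,
              ← ENNReal.ofReal_mul hc₂0.le,
              show c₂ * c₂ ^ (n+1) = c₂ ^ (n+2) by ring]
            ring
    -- apply the Carleson embedding to the enlarged balls
    have hcB := hcarlB ι hι c (fun i => c₂ * r i) (fun i => mul_pos hc₂0 (hr i))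
      (c₂ * r₀) (fun i => mul_le_mul_of_nonneg_left (hri i) hc₂0.le)
      E hEm
      (fun i => (hEsub i).trans (closedBall_subset_closedBall
        (le_mul_of_one_le_left (hr i).le hc₂)))
      hEdisj
      (fun i => by
        rw [ball_scale n (c i) (hr i).le hc₂0.le, ← mul_assoc,
          ← ENNReal.ofReal_mul (by positivity),
          div_mul_cancel₀ η (by positivity : (c₂:ℝ) ^ (n+1) ≠ 0)]
        exact hsparse i)
      hh hhmeas hhfin
    have hhq : ∫⁻ x, hh x ^ q = ∫⁻ y in closedBall c₁ r₁, ENNReal.ofReal |f y| ^ q := by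
      have hpt : ∀ x, hh x ^ q =
          (closedBall c₁ r₁).indicator (fun y => ENNReal.ofReal |f y| ^ q) x := by
        intro x
        rw [hh_def]
        by_cases hx : x ∈ closedBall c₁ r₁
        · rw [Set.indicator_of_mem hx, Set.indicator_of_mem hx]
        · rw [Set.indicator_of_notMem hx, Set.indicator_of_notMem hx,
            ENNReal.zero_rpow_of_pos hq0]
      simp_rw [hpt]
      rw [lintegral_indicator measurableSet_closedBall]
    calc ∑' i, ((∫⁻ y in B i, ENNReal.ofReal |f y|) / volume (B i)) ^ q *
        volume (closedBall (c i) (r i))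
        ≤ ∑' i, (ENNReal.ofReal (c₂ ^ (n+2))) ^ q *
            (((∫⁻ x in closedBall (c i) (c₂ * r i), hh x) /
              volume (closedBall (c i) (c₂ * r i))) ^ q *
            volume (closedBall (c i) (c₂ * r i))) := by
          refine ENNReal.tsum_le_tsum fun i => ?_
          have hmm : volume (closedBall (c i) (r i)) ≤
              volume (closedBall (c i) (c₂ * r i)) :=
            measure_mono (closedBall_subset_closedBall (le_mul_of_one_le_left (hr i).le hc₂))
          calc ((∫⁻ y in B i, ENNReal.ofReal |f y|) / volume (B i)) ^ q *
              volume (closedBall (c i) (r i))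
              ≤ (ENNReal.ofReal (c₂ ^ (n+2)) * ((∫⁻ x in closedBall (c i) (c₂ * r i), hh x) /
                  volume (closedBall (c i) (c₂ * r i)))) ^ q *
                  volume (closedBall (c i) (c₂ * r i)) :=
                mul_le_mul' (ENNReal.rpow_le_rpow (hbound i) hq0.le) hmm
            _ = (ENNReal.ofReal (c₂ ^ (n+2))) ^ q *
                (((∫⁻ x in closedBall (c i) (c₂ * r i), hh x) /
                  volume (closedBall (c i) (c₂ * r i))) ^ q *
                volume (closedBall (c i) (c₂ * r i))) := by
                rw [ENNReal.mul_rpow_of_nonneg _ _ hq0.le, mul_assoc]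
      _ = (ENNReal.ofReal (c₂ ^ (n+2))) ^ q *
            ∑' i, ((∫⁻ x in closedBall (c i) (c₂ * r i), hh x) /
              volume (closedBall (c i) (c₂ * r i))) ^ q *
            volume (closedBall (c i) (c₂ * r i)) := by
          rw [ENNReal.tsum_mul_left]
      _ ≤ (ENNReal.ofReal (c₂ ^ (n+2))) ^ q *
            (KB * ∫⁻ y in closedBall c₁ r₁, ENNReal.ofReal |f y| ^ q) := by
          rw [← hhq]
          exact mul_le_mul_right hcB _
  -- combine
  have hQt0 : volume (closedBall c₁ r₁) ≠ 0 := (measure_closedBall_pos _ _ hr₁).ne'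
  have hQttop : volume (closedBall c₁ r₁) ≠ ⊤ := (isCompact_closedBall _ _).measure_lt_top.ne
  refine le_trans (main_sum_le q q' hconj
    (fun i => (∫⁻ x in closedBall (c i) (r i), ENNReal.ofReal (g x)) /
      volume (closedBall (c i) (r i)))
    (fun i => (∫⁻ y in B i, ENNReal.ofReal |f y|) / volume (B i))
    (fun i => volume (closedBall (c i) (r i))) hm0 hmtop) ?_
  set I : ℝ≥0∞ := ∫⁻ y in closedBall c₁ r₁, ENNReal.ofReal |f y| ^ q with hI_def
  have hIsplit : I ^ (1/q) ≤ (ENNReal.ofReal c₂) ^ (1/q) *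
      (volume (closedBall c₀ r₀)) ^ (1/q) *
      (I / volume (closedBall c₁ r₁)) ^ (1/q) := by
    have hIeq : I = volume (closedBall c₁ r₁) * (I / volume (closedBall c₁ r₁)) :=
      (ENNReal.mul_div_cancel hQt0 hQttop).symm
    calc I ^ (1/q)
        = ((volume (closedBall c₁ r₁)) ^ (1/q)) * (I / volume (closedBall c₁ r₁)) ^ (1/q) := by
          conv_lhs => rw [hIeq]
          exact ENNReal.mul_rpow_of_nonneg _ _ h1q.le
      _ ≤ ((ENNReal.ofReal c₂ * volume (closedBall c₀ r₀)) ^ (1/q)) *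
            (I / volume (closedBall c₁ r₁)) ^ (1/q) :=
          mul_le_mul_left (ENNReal.rpow_le_rpow hQtQ h1q.le) _
      _ = (ENNReal.ofReal c₂) ^ (1/q) * (volume (closedBall c₀ r₀)) ^ (1/q) *
            (I / volume (closedBall c₁ r₁)) ^ (1/q) := by
          rw [ENNReal.mul_rpow_of_nonneg _ _ h1q.le]
  have hKC : K ≤ ENNReal.ofReal (K.toReal + 1) := by
    calc K = ENNReal.ofReal K.toReal := (ENNReal.ofReal_toReal hKtop).symm
      _ ≤ ENNReal.ofReal (K.toReal + 1) := ENNReal.ofReal_le_ofReal (by linarith)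
  calc (∑' i, ((∫⁻ x in closedBall (c i) (r i), ENNReal.ofReal (g x)) /
        volume (closedBall (c i) (r i))) ^ q' * volume (closedBall (c i) (r i))) ^ (1/q') *
      (∑' i, ((∫⁻ y in B i, ENNReal.ofReal |f y|) / volume (B i)) ^ q *
        volume (closedBall (c i) (r i))) ^ (1/q)
      ≤ KA ^ (1/q') * ((ENNReal.ofReal (c₂ ^ (n+2))) ^ q * (KB * I)) ^ (1/q) :=
        mul_le_mul' (ENNReal.rpow_le_rpow hA_le hq'pos.le)
          (ENNReal.rpow_le_rpow hB_le h1q.le)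
    _ = KA ^ (1/q') * ((ENNReal.ofReal (c₂ ^ (n+2))) ^ q * KB) ^ (1/q) * I ^ (1/q) := by
        rw [show (ENNReal.ofReal (c₂ ^ (n+2))) ^ q * (KB * I) =
          ((ENNReal.ofReal (c₂ ^ (n+2))) ^ q * KB) * I by ring,
          ENNReal.mul_rpow_of_nonneg _ _ h1q.le, mul_assoc]
    _ ≤ KA ^ (1/q') * ((ENNReal.ofReal (c₂ ^ (n+2))) ^ q * KB) ^ (1/q) *
          ((ENNReal.ofReal c₂) ^ (1/q) * (volume (closedBall c₀ r₀)) ^ (1/q) *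
            (I / volume (closedBall c₁ r₁)) ^ (1/q)) :=
        mul_le_mul_right hIsplit _
    _ = K * (volume (closedBall c₀ r₀)) ^ (1/q) *
          (I / volume (closedBall c₁ r₁)) ^ (1/q) := by
        rw [hK_def]; ring
    _ ≤ ENNReal.ofReal (K.toReal + 1) * (volume (closedBall c₀ r₀)) ^ (1/q) *
          (I / volume (closedBall c₁ r₁)) ^ (1/q) := by
        exact mul_le_mul_left (mul_le_mul_left hKC _) _
end
end

section
/- Failure of sparse operator boundedness on Carleson spaces: in dimension n = 1, let Q₀ = (0,1), f_N = 2^N 1_{(0,2^{-N})×Q₀}, and let Ŝ be the sparse operator Ŝf(x) = ∑_{Q ∈ D̂, Q ∋ x} avg_{3Q}|f| over the (1/2-sparse) collection D̂ of all dyadic Carleson squares contained in Q₀^{ca} = (0,1)². Then ‖C f_N‖_{L^p(0,1)} ≤ 1 for every p, while Ŝf_N(t,x) ≈ 1/t on Q₀^{ca} for t ≥ 2^{-N}, so that C(Ŝ f_N)(x) ≳ N for every x ∈ Q₀. Hence there is no constant C_p with ‖C(Ŝf)‖_p ≤ C_p ‖Cf‖_p for all f. -/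
open MeasureTheory Set
open scoped ENNReal Classical

noncomputable section

/-- The dyadic Carleson square `R^{ca} = (0, 2^{-j}) × [i 2^{-j}, (i+1) 2^{-j})` in `ℝ²₊`. -/
def dSq (j i : ℕ) : Set (ℝ × ℝ) :=
  Set.Ioo 0 ((2 : ℝ) ^ (-(j : ℤ))) ×ˢ
    Set.Ico ((i : ℝ) * 2 ^ (-(j : ℤ))) (((i : ℝ) + 1) * 2 ^ (-(j : ℤ)))

/-- The concentric dilate `3R^{ca}` intersected with the upper half-plane. -/
def dSq3 (j i : ℕ) : Set (ℝ × ℝ) :=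
  Set.Ioo 0 (2 * (2 : ℝ) ^ (-(j : ℤ))) ×ˢ
    Set.Ico (((i : ℝ) - 1) * 2 ^ (-(j : ℤ))) (((i : ℝ) + 2) * 2 ^ (-(j : ℤ)))

/-- The sparse operator `Ŝf(z) = ∑_{Q ∈ D̂, Q ∋ z} avg_{3Q} |f|` over the collection `D̂` of
all dyadic Carleson squares contained in `(0,1)²`. -/
def sparseOp (f : ℝ × ℝ → ℝ) (z : ℝ × ℝ) : ℝ≥0∞ :=
  ∑' ji : ℕ × ℕ,
    if ji.2 < 2 ^ ji.1 ∧ z ∈ dSq ji.1 ji.2 then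
      (volume (dSq3 ji.1 ji.2))⁻¹ * ∫⁻ w in dSq3 ji.1 ji.2, ENNReal.ofReal |f w|
    else 0

/-- The Carleson functional on `ℝ²₊` for `ℝ≥0∞`-valued functions,
`Cg(x) = sup_{Q ∋ x} |Q|⁻¹ ∫_{Q^{ca}} g`, with `Q = [a, a+ℓ)` and `Q^{ca} = (0,ℓ) × Q`. -/
def carlE (g : ℝ × ℝ → ℝ≥0∞) (x : ℝ) : ℝ≥0∞ :=
  ⨆ (a : ℝ) (ℓ : ℝ) (_ : 0 < ℓ) (_ : x ∈ Set.Ico a (a + ℓ)),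
    (ENNReal.ofReal ℓ)⁻¹ * ∫⁻ w in Set.Ioo 0 ℓ ×ˢ Set.Ico a (a + ℓ), g w

/-- The Carleson functional applied to a real-valued function. -/
def carl (f : ℝ × ℝ → ℝ) (x : ℝ) : ℝ≥0∞ :=
  carlE (fun w => ENNReal.ofReal |f w|) x

/-- The function `f_N = 2^N 1_{(0,2^{-N}) × Q₀}`, `Q₀ = (0,1)`. -/
def fCtr (N : ℕ) (w : ℝ × ℝ) : ℝ :=
  if w.1 ∈ Set.Ioo (0 : ℝ) ((2 : ℝ) ^ (-(N : ℤ))) ∧ w.2 ∈ Set.Ioo (0 : ℝ) 1 then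
    2 ^ N else 0

-- auxiliary
lemma rpos (j : ℕ) : (0:ℝ) < 2 ^ (-(j:ℤ)) := zpow_pos (by norm_num) _

lemma r_eq (j : ℕ) : (2:ℝ) ^ (-(j:ℤ)) = ((2:ℝ)^j)⁻¹ := by
  rw [zpow_neg, zpow_natCast]

lemma r_anti {j k : ℕ} (h : j ≤ k) : (2:ℝ)^(-(k:ℤ)) ≤ 2^(-(j:ℤ)) :=
  zpow_le_zpow_right₀ (by norm_num) (by omega)

lemma r_lt {j N : ℕ} (h : (2:ℝ)^(-(N:ℤ)) < 2^(-(j:ℤ))) : j < N := by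
  have := (zpow_lt_zpow_iff_right₀ (by norm_num : (1:ℝ) < 2)).mp h; omega

def SN (N : ℕ) : Set (ℝ×ℝ) := Set.Ioo 0 ((2:ℝ)^(-(N:ℤ))) ×ˢ Set.Ioo 0 1

lemma measurableSet_SN (N : ℕ) : MeasurableSet (SN N) :=
  measurableSet_Ioo.prod measurableSet_Ioo

lemma ofReal_fCtr (N : ℕ) (w : ℝ×ℝ) :
    ENNReal.ofReal |fCtr N w| = (SN N).indicator (fun _ => ENNReal.ofReal ((2:ℝ)^N)) w := by
  unfold fCtr
  by_cases h : w.1 ∈ Set.Ioo (0:ℝ) ((2:ℝ)^(-(N:ℤ))) ∧ w.2 ∈ Set.Ioo (0:ℝ) 1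
  · rw [if_pos h, Set.indicator_of_mem (by exact h)]
    rw [abs_of_nonneg (by positivity)]
  · rw [if_neg h, Set.indicator_of_notMem (by exact h)]
    simp

lemma lint_fCtr (N : ℕ) (T : Set (ℝ×ℝ)) :
    ∫⁻ w in T, ENNReal.ofReal |fCtr N w| =
      ENNReal.ofReal ((2:ℝ)^N) * volume (SN N ∩ T) := by
  simp_rw [ofReal_fCtr]
  rw [lintegral_indicator (measurableSet_SN N),
    Measure.restrict_restrict (measurableSet_SN N), setLIntegral_const]

lemma vol_prod (s t : Set ℝ) : volume (s ×ˢ t) = volume s * volume t := by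
  rw [MeasureTheory.Measure.volume_eq_prod, MeasureTheory.Measure.prod_prod]

lemma carl_le_one (N : ℕ) (x : ℝ) : carl (fCtr N) x ≤ 1 := by
  unfold carl carlE
  refine iSup_le fun a => iSup_le fun ℓ => iSup_le fun hℓ => iSup_le fun _ => ?_
  rw [lint_fCtr]
  have h1 : SN N ∩ (Set.Ioo 0 ℓ ×ˢ Set.Ico a (a+ℓ)) ⊆
      Set.Ioo 0 ((2:ℝ)^(-(N:ℤ))) ×ˢ Set.Ico a (a+ℓ) := fun w hw => ⟨hw.1.1, hw.2.2⟩
  have h2 : volume (SN N ∩ (Set.Ioo 0 ℓ ×ˢ Set.Ico a (a+ℓ))) ≤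
      ENNReal.ofReal ((2:ℝ)^(-(N:ℤ))) * ENNReal.ofReal ℓ := by
    refine le_trans (measure_mono h1) ?_
    rw [vol_prod, Real.volume_Ioo, Real.volume_Ico]
    simp
  calc (ENNReal.ofReal ℓ)⁻¹ * (ENNReal.ofReal ((2:ℝ)^N) * volume (SN N ∩ (Set.Ioo 0 ℓ ×ˢ Set.Ico a (a+ℓ))))
      ≤ (ENNReal.ofReal ℓ)⁻¹ * (ENNReal.ofReal ((2:ℝ)^N) * (ENNReal.ofReal ((2:ℝ)^(-(N:ℤ))) * ENNReal.ofReal ℓ)) := by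
        gcongr
    _ = (ENNReal.ofReal ℓ)⁻¹ * ENNReal.ofReal ℓ := by
        rw [← mul_assoc (ENNReal.ofReal ((2:ℝ)^N)), ← ENNReal.ofReal_mul (by positivity)]
        norm_num [r_eq]
    _ = 1 := ENNReal.inv_mul_cancel (by simp [hℓ]) ENNReal.ofReal_ne_top

theorem part1 (N : ℕ) (p : ℝ) (hp : 1 ≤ p) :
    (∫⁻ x in Set.Ioo (0 : ℝ) 1, carl (fCtr N) x ^ p) ≤ 1 := by
  calc ∫⁻ x in Set.Ioo (0:ℝ) 1, carl (fCtr N) x ^ p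
      ≤ ∫⁻ _ in Set.Ioo (0:ℝ) 1, 1 :=
        lintegral_mono fun x => ENNReal.rpow_le_one (carl_le_one N x) (by linarith)
    _ = volume (Set.Ioo (0:ℝ) 1) := setLIntegral_one _
    _ = 1 := by rw [Real.volume_Ioo]; norm_num

lemma avg_bounds (N j i : ℕ) (hj : j < N) (hi : i < 2 ^ j) :
    ENNReal.ofReal ((2:ℝ)^j / 6) ≤
      (volume (dSq3 j i))⁻¹ * ∫⁻ w in dSq3 j i, ENNReal.ofReal |fCtr N w| ∧
    (volume (dSq3 j i))⁻¹ * ∫⁻ w in dSq3 j i, ENNReal.ofReal |fCtr N w| ≤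
      ENNReal.ofReal ((2:ℝ)^j / 2) := by
  set r : ℝ := (2:ℝ)^(-(j:ℤ)) with hr
  have hrpos : 0 < r := rpos j
  have hrNpos : 0 < (2:ℝ)^(-(N:ℤ)) := rpos N
  have hrNr : (2:ℝ)^(-(N:ℤ)) ≤ 2 * r := by
    have := r_anti (le_of_lt hj); nlinarith
  -- volume of dSq3
  have hvol : volume (dSq3 j i) = ENNReal.ofReal (2*r) * ENNReal.ofReal (3*r) := by
    rw [dSq3, vol_prod, Real.volume_Ioo, Real.volume_Ico]
    congr 2 <;> ring
  -- the integral
  have hX : SN N ∩ dSq3 j i =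
      Set.Ioo 0 ((2:ℝ)^(-(N:ℤ))) ×ˢ
        (Set.Ioo 0 1 ∩ Set.Ico (((i:ℝ)-1)*r) (((i:ℝ)+2)*r)) := by
    rw [SN, dSq3, Set.prod_inter_prod, Set.Ioo_inter_Ioo]
    rw [sup_idem, inf_eq_left.mpr hrNr]
  set X : Set ℝ := Set.Ioo 0 1 ∩ Set.Ico (((i:ℝ)-1)*r) (((i:ℝ)+2)*r) with hXdef
  have hXlow : ENNReal.ofReal r ≤ volume X := by
    have hsub : Set.Ioo ((i:ℝ)*r) (((i:ℝ)+1)*r) ⊆ X := by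
      intro y hy
      have h2j : ((i:ℝ)+1) * r ≤ 1 := by
        have : ((i:ℝ)+1) ≤ 2^j := by
          have : (i:ℝ) + 1 ≤ (2^j : ℕ) := by exact_mod_cast hi
          simpa using this
        rw [hr, r_eq]
        rw [mul_inv_le_iff₀ (by positivity)]
        simpa using this
      constructor
      · constructor
        · have : (0:ℝ) ≤ (i:ℝ)*r := by positivity
          linarith [hy.1]
        · linarith [hy.2]
      · constructor
        · nlinarith [hy.1]
        · nlinarith [hy.2]
    calc ENNReal.ofReal r = volume (Set.Ioo ((i:ℝ)*r) (((i:ℝ)+1)*r)) := by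
          rw [Real.volume_Ioo]; congr 1; ring
      _ ≤ volume X := measure_mono hsub
  have hXhigh : volume X ≤ ENNReal.ofReal (3*r) := by
    calc volume X ≤ volume (Set.Ico (((i:ℝ)-1)*r) (((i:ℝ)+2)*r)) :=
          measure_mono Set.inter_subset_right
      _ = ENNReal.ofReal (3*r) := by rw [Real.volume_Ico]; congr 1; ring
  have hint : ∫⁻ w in dSq3 j i, ENNReal.ofReal |fCtr N w| =
      ENNReal.ofReal ((2:ℝ)^N) * (ENNReal.ofReal ((2:ℝ)^(-(N:ℤ))) * volume X) := by
    rw [lint_fCtr, hX, vol_prod, Real.volume_Ioo, sub_zero]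
  -- put it together
  have hC : (volume (dSq3 j i))⁻¹ * ∫⁻ w in dSq3 j i, ENNReal.ofReal |fCtr N w| =
      ENNReal.ofReal (((2*r)*(3*r))⁻¹ * ((2:ℝ)^N * 2^(-(N:ℤ)))) * volume X := by
    rw [hvol, hint, ← ENNReal.ofReal_mul (by positivity),
      ← ENNReal.ofReal_inv_of_pos (by positivity)]
    rw [← mul_assoc, ← mul_assoc, ← ENNReal.ofReal_mul (by positivity),
      ← ENNReal.ofReal_mul (by positivity)]
    ring_nf
  have hpowN : (2:ℝ)^N * 2^(-(N:ℤ)) = 1 := by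
    rw [r_eq]; field_simp
  constructor
  · calc ENNReal.ofReal ((2:ℝ)^j / 6)
        = ENNReal.ofReal (((2*r)*(3*r))⁻¹ * ((2:ℝ)^N * 2^(-(N:ℤ)))) * ENNReal.ofReal r := by
          rw [← ENNReal.ofReal_mul (by positivity)]
          congr 1
          rw [hpowN, hr, r_eq]
          field_simp
          ring
      _ ≤ ENNReal.ofReal (((2*r)*(3*r))⁻¹ * ((2:ℝ)^N * 2^(-(N:ℤ)))) * volume X := by gcongr
      _ = _ := hC.symm
  · calc (volume (dSq3 j i))⁻¹ * ∫⁻ w in dSq3 j i, ENNReal.ofReal |fCtr N w|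
        = ENNReal.ofReal (((2*r)*(3*r))⁻¹ * ((2:ℝ)^N * 2^(-(N:ℤ)))) * volume X := hC
      _ ≤ ENNReal.ofReal (((2*r)*(3*r))⁻¹ * ((2:ℝ)^N * 2^(-(N:ℤ)))) * ENNReal.ofReal (3*r) := by
          gcongr
      _ = ENNReal.ofReal ((2:ℝ)^j / 2) := by
          rw [← ENNReal.ofReal_mul (by positivity)]
          congr 1
          rw [hpowN, hr, r_eq]
          field_simp

lemma mem_dSq_iff {t x : ℝ} {j i : ℕ} :
    (t,x) ∈ dSq j i ↔ (0 < t ∧ t < 2^(-(j:ℤ))) ∧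
      ((i:ℝ) * 2^(-(j:ℤ)) ≤ x ∧ x < ((i:ℝ)+1) * 2^(-(j:ℤ))) := by
  simp [dSq, Set.mem_prod, Set.mem_Ioo, Set.mem_Ico]

lemma floor_mem (x : ℝ) (hx : x ∈ Set.Ico (0:ℝ) 1) (j : ℕ) :
    ⌊x * 2^j⌋₊ < 2^j ∧ ((⌊x * 2^j⌋₊:ℝ) * 2^(-(j:ℤ)) ≤ x ∧
      x < ((⌊x * 2^j⌋₊:ℝ)+1) * 2^(-(j:ℤ))) := by
  have hx0 : (0:ℝ) ≤ x * 2^j := mul_nonneg hx.1 (by positivity)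
  have h2j : (0:ℝ) < 2^j := by positivity
  have hfl : (⌊x * 2^j⌋₊ : ℝ) ≤ x * 2^j := Nat.floor_le hx0
  have hfu : x * 2^j < ⌊x * 2^j⌋₊ + 1 := Nat.lt_floor_add_one _
  refine ⟨?_, ?_, ?_⟩
  · refine (Nat.floor_lt hx0).mpr ?_
    push_cast
    nlinarith [hx.2]
  · rw [r_eq, ← div_eq_mul_inv, div_le_iff₀ h2j]
    exact hfl
  · rw [r_eq, ← div_eq_mul_inv, lt_div_iff₀ h2j]
    exact hfu

lemma floor_unique (x : ℝ) (hx : x ∈ Set.Ico (0:ℝ) 1) (j i : ℕ)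
    (h1 : (i:ℝ) * 2^(-(j:ℤ)) ≤ x) (h2 : x < ((i:ℝ)+1) * 2^(-(j:ℤ))) :
    i = ⌊x * 2^j⌋₊ := by
  have hx0 : (0:ℝ) ≤ x * 2^j := mul_nonneg hx.1 (by positivity)
  have h2j : (0:ℝ) < 2^j := by positivity
  refine ((Nat.floor_eq_iff hx0).mpr ?_).symm
  rw [r_eq, ← div_eq_mul_inv, div_le_iff₀ h2j] at h1
  rw [r_eq, ← div_eq_mul_inv, lt_div_iff₀ h2j] at h2
  constructor
  · linarith
  · push_cast; linarith

lemma sparse_bounds (N : ℕ) (t x : ℝ) (ht : t ∈ Set.Ioo (0:ℝ) 1)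
    (hx : x ∈ Set.Ico (0:ℝ) 1) (htN : (2:ℝ)^(-(N:ℤ)) ≤ t) :
    ENNReal.ofReal ((1/12) / t) ≤ sparseOp (fCtr N) (t, x) ∧
    sparseOp (fCtr N) (t, x) ≤ ENNReal.ofReal (1 / t) := by
  obtain ⟨ht0, ht1⟩ := ht
  set term : ℕ × ℕ → ℝ≥0∞ := fun ji =>
    if ji.2 < 2 ^ ji.1 ∧ (t,x) ∈ dSq ji.1 ji.2 then
      (volume (dSq3 ji.1 ji.2))⁻¹ * ∫⁻ w in dSq3 ji.1 ji.2, ENNReal.ofReal |fCtr N w|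
    else 0 with hterm
  have hsp : sparseOp (fCtr N) (t, x) = ∑' ji : ℕ × ℕ, term ji := rfl
  set P : ℕ → Prop := fun j => t < 2^(-(j:ℤ)) with hP
  have hP0 : P 0 := by simpa [hP] using ht1
  set m : ℕ := Nat.findGreatest P N with hm
  have hPm : P m := Nat.findGreatest_spec (Nat.zero_le N) hP0
  have hmleN : m ≤ N := Nat.findGreatest_le N
  have hmN : m < N := by
    rcases lt_or_eq_of_le hmleN with h | h
    · exact h
    · exact absurd hPm (by rw [h]; simpa [hP] using htN)
  have hnP : ¬ t < (2:ℝ)^(-((m+1:ℕ):ℤ)) := by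
    have := Nat.findGreatest_is_greatest (by omega : Nat.findGreatest P N < m+1)
      (by omega : m+1 ≤ N)
    exact this
  have hsucc : (2:ℝ)^(-((m+1:ℕ):ℤ)) ≤ t := not_lt.mp hnP
  have hsucc' : ((2:ℝ)^(m+1))⁻¹ ≤ t := by rw [← r_eq]; exact hsucc
  have hkey : ∀ j : ℕ, m < j → (2:ℝ)^(-(j:ℤ)) ≤ t :=
    fun j hj => le_trans (r_anti (by omega)) hsucc
  have hjle : ∀ j i : ℕ, (i < 2^j ∧ (t,x) ∈ dSq j i) → j ≤ m := by
    intro j i hc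
    by_contra hcon
    exact absurd (mem_dSq_iff.mp hc.2).1.2 (not_lt.mpr (hkey j (by omega)))
  constructor
  -- LOWER BOUND
  · have hmem : ⌊x * 2^m⌋₊ < 2^m ∧ (t, x) ∈ dSq m ⌊x * 2^m⌋₊ := by
      obtain ⟨a, b, c⟩ := floor_mem x hx m
      exact ⟨a, mem_dSq_iff.mpr ⟨⟨ht0, hPm⟩, b, c⟩⟩
    have h1 : term (m, ⌊x * 2^m⌋₊) ≤ sparseOp (fCtr N) (t, x) := by
      rw [hsp]; exact ENNReal.le_tsum _
    have h2 : ENNReal.ofReal ((2:ℝ)^m / 6) ≤ term (m, ⌊x * 2^m⌋₊) := by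
      rw [hterm]; simp only [if_pos hmem]
      exact (avg_bounds N m _ hmN hmem.1).1
    refine le_trans ?_ (le_trans h2 h1)
    apply ENNReal.ofReal_le_ofReal
    rw [div_le_div_iff₀ ht0 (by norm_num)]
    have hmul := mul_le_mul_of_nonneg_left hsucc'
      (le_of_lt (pow_pos (by norm_num : (0:ℝ) < 2) m))
    have hcancel : (2:ℝ)^m * ((2:ℝ)^(m+1))⁻¹ = 1/2 := by
      rw [pow_succ]
      field_simp
    rw [hcancel] at hmul
    nlinarith
  -- UPPER BOUND
  · set v : ℕ → ℝ≥0∞ := fun j =>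
      if t < 2^(-(j:ℤ)) then ENNReal.ofReal ((2:ℝ)^j / 2) else 0 with hv
    have step1 : sparseOp (fCtr N) (t, x) ≤ ∑' j : ℕ, v j := by
      rw [hsp, ENNReal.tsum_prod (f := fun a b => term (a,b))]
      refine ENNReal.tsum_le_tsum fun j => ?_
      by_cases hPj : t < 2^(-(j:ℤ))
      · -- unique i
        have huniq : ∀ i : ℕ, i ≠ ⌊x * 2^j⌋₊ → term (j, i) = 0 := by
          intro i hi
          rw [hterm]; simp only
          rw [if_neg]
          rintro ⟨-, hd⟩
          exact hi (floor_unique x hx j i (mem_dSq_iff.mp hd).2.1 (mem_dSq_iff.mp hd).2.2)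
        rw [tsum_eq_single _ huniq, hv]
        simp only [if_pos hPj]
        rw [hterm]; simp only
        by_cases hc : ⌊x * 2^j⌋₊ < 2^j ∧ (t,x) ∈ dSq j ⌊x * 2^j⌋₊
        · rw [if_pos hc]
          exact (avg_bounds N j _ (r_lt (lt_of_le_of_lt htN hPj)) hc.1).2
        · rw [if_neg hc]; exact zero_le
      · have hz : ∀ i : ℕ, term (j, i) = 0 := by
          intro i
          rw [hterm]; simp only
          rw [if_neg]
          rintro ⟨-, hd⟩
          exact hPj (mem_dSq_iff.mp hd).1.2
        rw [hv]; simp only [if_neg hPj]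
        simp [hz]
    have step2 : ∑' j : ℕ, v j = ∑ j ∈ Finset.range (m+1), v j := by
      refine tsum_eq_sum fun j hj => ?_
      rw [hv]; simp only
      rw [if_neg]
      exact not_lt.mpr (hkey j (by simpa using hj))
    have step3 : ∑ j ∈ Finset.range (m+1), v j ≤
        ∑ j ∈ Finset.range (m+1), ENNReal.ofReal ((2:ℝ)^j / 2) := by
      refine Finset.sum_le_sum fun j _ => ?_
      rw [hv]; simp only
      split_ifs
      · exact le_refl _
      · exact zero_le
    have step4 : ∑ j ∈ Finset.range (m+1), ENNReal.ofReal ((2:ℝ)^j / 2) ≤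
        ENNReal.ofReal (1 / t) := by
      rw [← ENNReal.ofReal_sum_of_nonneg (fun j _ => by positivity)]
      apply ENNReal.ofReal_le_ofReal
      rw [← Finset.sum_div, geom_sum_eq (by norm_num) (m+1)]
      have h2m : t < ((2:ℝ)^m)⁻¹ := by rw [← r_eq]; exact hPm
      rw [div_le_div_iff₀ (by norm_num) ht0]
      have : t * 2^m < 1 := by
        have := mul_lt_mul_of_pos_right h2m (pow_pos (by norm_num : (0:ℝ) < 2) m)
        rwa [inv_mul_cancel₀ (by positivity)] at this
      rw [pow_succ]
      nlinarith
    calc sparseOp (fCtr N) (t, x) ≤ ∑' j : ℕ, v j := step1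
      _ = _ := step2
      _ ≤ _ := step3
      _ ≤ _ := step4

def shell (k : ℕ) : Set (ℝ×ℝ) :=
  Set.Ioo ((2:ℝ)^(-((k+1:ℕ):ℤ))) ((2:ℝ)^(-(k:ℤ))) ×ˢ Set.Ico (0:ℝ) 1

lemma measurableSet_shell (k : ℕ) : MeasurableSet (shell k) :=
  measurableSet_Ioo.prod measurableSet_Ico

lemma shell_vol (k : ℕ) : volume (shell k) = ENNReal.ofReal (((2:ℝ)^(k+1))⁻¹) := by
  rw [shell, vol_prod, Real.volume_Ioo, Real.volume_Ico, r_eq, r_eq]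
  rw [sub_zero, ENNReal.ofReal_one, mul_one]
  congr 1
  ring

lemma r_le_one (k : ℕ) : (2:ℝ)^(-(k:ℤ)) ≤ 1 := by
  simpa using r_anti (Nat.zero_le k)

lemma carlE_lower (N : ℕ) (x : ℝ) (hx : x ∈ Set.Ioo (0:ℝ) 1) :
    ENNReal.ofReal ((1/24) * N) ≤ carlE (sparseOp (fCtr N)) x := by
  have hshell : ∀ k ∈ Finset.range N,
      ENNReal.ofReal (1/24) ≤ ∫⁻ w in shell k, sparseOp (fCtr N) w := by
    intro k hk
    have hk' : k < N := Finset.mem_range.mp hk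
    have hconst : ∀ w ∈ shell k,
        ENNReal.ofReal ((2:ℝ)^k/12) ≤ sparseOp (fCtr N) w := by
      rintro ⟨t, y⟩ ⟨htm, hym⟩
      have ht0 : (0:ℝ) < t := lt_trans (rpos (k+1)) htm.1
      have ht1 : t < 1 := lt_of_lt_of_le htm.2 (r_le_one k)
      have htN : (2:ℝ)^(-(N:ℤ)) ≤ t :=
        le_of_lt (lt_of_le_of_lt (r_anti (by omega : k+1 ≤ N)) htm.1)
      have hsb := (sparse_bounds N t y ⟨ht0, ht1⟩ hym htN).1
      refine le_trans ?_ hsb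
      apply ENNReal.ofReal_le_ofReal
      rw [div_le_div_iff₀ (by norm_num) ht0]
      have hlt : t < ((2:ℝ)^k)⁻¹ := by rw [← r_eq]; exact htm.2
      have h2k : (0:ℝ) < 2^k := by positivity
      have : (2:ℝ)^k * t < 1 := by
        have := mul_lt_mul_of_pos_left hlt h2k
        rwa [mul_inv_cancel₀ (by positivity)] at this
      nlinarith
    calc ENNReal.ofReal (1/24)
        = ENNReal.ofReal ((2:ℝ)^k/12) * volume (shell k) := by
          rw [shell_vol, ← ENNReal.ofReal_mul (by positivity)]
          congr 1
          rw [pow_succ]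
          field_simp
          ring
      _ = ∫⁻ _ in shell k, ENNReal.ofReal ((2:ℝ)^k/12) := (setLIntegral_const _ _).symm
      _ ≤ ∫⁻ w in shell k, sparseOp (fCtr N) w :=
          lintegral_mono_ae ((ae_restrict_mem (measurableSet_shell k)).mono hconst)
  have hdisj : (↑(Finset.range N) : Set ℕ).PairwiseDisjoint shell := by
    intro a _ b _ hab
    refine Set.disjoint_left.mpr ?_
    rintro ⟨t, y⟩ ha' hb'
    have h1 := ha'.1
    have h2 := hb'.1
    rcases lt_or_gt_of_ne hab with h | h
    · have hle : (2:ℝ)^(-(b:ℤ)) ≤ 2^(-((a+1:ℕ):ℤ)) := r_anti (by omega)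
      exact absurd (lt_trans h2.2 (lt_of_le_of_lt hle h1.1)) (lt_irrefl t)
    · have hle : (2:ℝ)^(-(a:ℤ)) ≤ 2^(-((b+1:ℕ):ℤ)) := r_anti (by omega)
      exact absurd (lt_trans h1.2 (lt_of_le_of_lt hle h2.1)) (lt_irrefl t)
  have hunion : ∫⁻ w in ⋃ k ∈ Finset.range N, shell k, sparseOp (fCtr N) w =
      ∑ k ∈ Finset.range N, ∫⁻ w in shell k, sparseOp (fCtr N) w :=
    lintegral_biUnion_finset hdisj (fun k _ => measurableSet_shell k) _
  have hsub : (⋃ k ∈ Finset.range N, shell k) ⊆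
      Set.Ioo (0:ℝ) 1 ×ˢ Set.Ico (0:ℝ) (0+1) := by
    intro w hw
    simp only [Set.mem_iUnion] at hw
    obtain ⟨k, _, hwk⟩ := hw
    refine ⟨⟨lt_trans (rpos (k+1)) hwk.1.1, lt_of_lt_of_le hwk.1.2 (r_le_one k)⟩, ?_⟩
    simpa using hwk.2
  have hmem : x ∈ Set.Ico (0:ℝ) (0+1) := by
    constructor
    · exact le_of_lt hx.1
    · simpa using hx.2
  have hfinal : (∫⁻ w in Set.Ioo (0:ℝ) 1 ×ˢ Set.Ico (0:ℝ) (0+1), sparseOp (fCtr N) w) ≤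
      carlE (sparseOp (fCtr N)) x := by
    refine le_iSup_of_le 0 (le_iSup_of_le 1 (le_iSup_of_le one_pos (le_iSup_of_le hmem ?_)))
    simp [ENNReal.ofReal_one]
  calc ENNReal.ofReal ((1/24) * N)
      = (N : ℝ≥0∞) * ENNReal.ofReal (1/24) := by
        rw [← ENNReal.ofReal_natCast N, ← ENNReal.ofReal_mul (by positivity)]
        congr 1
        ring
    _ = ∑ _k ∈ Finset.range N, ENNReal.ofReal (1/24) := by
        rw [Finset.sum_const, Finset.card_range, nsmul_eq_mul]
    _ ≤ ∑ k ∈ Finset.range N, ∫⁻ w in shell k, sparseOp (fCtr N) w :=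
        Finset.sum_le_sum hshell
    _ = ∫⁻ w in ⋃ k ∈ Finset.range N, shell k, sparseOp (fCtr N) w := hunion.symm
    _ ≤ ∫⁻ w in Set.Ioo (0:ℝ) 1 ×ˢ Set.Ico (0:ℝ) (0+1), sparseOp (fCtr N) w :=
        lintegral_mono_set hsub
    _ ≤ carlE (sparseOp (fCtr N)) x := hfinal

lemma fCtr_measurable (N : ℕ) : Measurable (fCtr N) := by
  unfold fCtr
  refine Measurable.ite ?_ measurable_const measurable_const
  exact measurableSet_Ioo.prod measurableSet_Ioo

theorem part4 (p : ℝ) (hp : 1 < p) :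
    ¬ ∃ A : ℝ, 0 ≤ A ∧ ∀ f : ℝ × ℝ → ℝ, Measurable f →
      (∫⁻ x in Set.Ioo (0 : ℝ) 1, carlE (sparseOp f) x ^ p) ≤
        ENNReal.ofReal A * ∫⁻ x in Set.Ioo (0 : ℝ) 1, carl f x ^ p := by
  rintro ⟨A, hA, hbound⟩
  obtain ⟨N, hN⟩ := exists_nat_gt (24 * (A + 1))
  have hN1 : (1:ℝ) ≤ (1/24) * N := by linarith
  have hNA : A < (1/24) * N := by linarith
  have h1 := hbound (fCtr N) (fCtr_measurable N)
  have hup : ENNReal.ofReal A * (∫⁻ x in Set.Ioo (0:ℝ) 1, carl (fCtr N) x ^ p) ≤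
      ENNReal.ofReal A := by
    calc ENNReal.ofReal A * (∫⁻ x in Set.Ioo (0:ℝ) 1, carl (fCtr N) x ^ p)
        ≤ ENNReal.ofReal A * 1 := by
          gcongr
          exact part1 N p (le_of_lt hp)
      _ = ENNReal.ofReal A := mul_one _
  have hlow : ENNReal.ofReal ((1/24) * N) ≤
      ∫⁻ x in Set.Ioo (0:ℝ) 1, carlE (sparseOp (fCtr N)) x ^ p := by
    have hbase : 1 ≤ ENNReal.ofReal ((1/24) * N) := ENNReal.one_le_ofReal.mpr hN1
    calc ENNReal.ofReal ((1/24) * N)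
        = ENNReal.ofReal ((1/24) * N) ^ (1:ℝ) := (ENNReal.rpow_one _).symm
      _ ≤ ENNReal.ofReal ((1/24) * N) ^ p :=
          ENNReal.rpow_le_rpow_of_exponent_le hbase (le_of_lt hp)
      _ = ∫⁻ _ in Set.Ioo (0:ℝ) 1, ENNReal.ofReal ((1/24) * N) ^ p := by
          rw [setLIntegral_const, Real.volume_Ioo]
          norm_num
      _ ≤ ∫⁻ x in Set.Ioo (0:ℝ) 1, carlE (sparseOp (fCtr N)) x ^ p := by
          refine lintegral_mono_ae (((ae_restrict_mem measurableSet_Ioo)).mono ?_)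
          intro y hy
          exact ENNReal.rpow_le_rpow (carlE_lower N y hy) (by linarith)
  have hcontr : ENNReal.ofReal ((1/24) * N) ≤ ENNReal.ofReal A :=
    le_trans hlow (le_trans h1 hup)
  have : ENNReal.ofReal A < ENNReal.ofReal ((1/24) * N) :=
    (ENNReal.ofReal_lt_ofReal_iff (by linarith)).mpr hNA
  exact absurd hcontr (not_le.mpr this)


/-- Failure of sparse operator boundedness on Carleson spaces: `‖C f_N‖_{L^p(0,1)} ≤ 1` for
every `p`, while `Ŝ f_N(t,x) ≈ 1/t` on `Q₀^{ca}` for `t ≥ 2^{-N}`, so that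
`C(Ŝ f_N) ≳ N` on `Q₀`; hence there is no constant `A` with `‖C(Ŝf)‖_p ≤ A ‖Cf‖_p`. -/
theorem sparse_operator_carleson_counterexample :
    (∀ (N : ℕ) (p : ℝ), 1 ≤ p →
      (∫⁻ x in Set.Ioo (0 : ℝ) 1, carl (fCtr N) x ^ p) ≤ 1) ∧
    (∃ c₁ c₂ : ℝ, 0 < c₁ ∧ 0 < c₂ ∧ ∀ (N : ℕ) (t x : ℝ),
      t ∈ Set.Ioo (0 : ℝ) 1 → x ∈ Set.Ico (0 : ℝ) 1 → (2 : ℝ) ^ (-(N : ℤ)) ≤ t →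
        ENNReal.ofReal (c₁ / t) ≤ sparseOp (fCtr N) (t, x) ∧
        sparseOp (fCtr N) (t, x) ≤ ENNReal.ofReal (c₂ / t)) ∧
    (∃ c₃ : ℝ, 0 < c₃ ∧ ∀ (N : ℕ) (x : ℝ), x ∈ Set.Ioo (0 : ℝ) 1 →
      ENNReal.ofReal (c₃ * N) ≤ carlE (sparseOp (fCtr N)) x) ∧
    (∀ p : ℝ, 1 < p → ¬ ∃ A : ℝ, 0 ≤ A ∧ ∀ f : ℝ × ℝ → ℝ, Measurable f →
      (∫⁻ x in Set.Ioo (0 : ℝ) 1, carlE (sparseOp f) x ^ p) ≤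
        ENNReal.ofReal A * ∫⁻ x in Set.Ioo (0 : ℝ) 1, carl f x ^ p) := by
  refine ⟨part1, ⟨1/12, 1, by norm_num, by norm_num,
    fun N t x ht hx htN => sparse_bounds N t x ht hx htN⟩,
    ⟨1/24, by norm_num, fun N x hx => carlE_lower N x hx⟩, part4⟩
end
end

section
/- Pointwise domination by a decaying majorant: let k satisfy the CZ size and regularity bounds of order γ ∈ (0,1] on R^{1+n}_+, let k^± be its causal truncations, and let Q be a cube of side ℓ centered at x₀. Then for all x₁, x ∈ Q and f supported in (3Q)^c: |S^± f(x₁) − S^± f(x)| ≲ M_Φ f(x₀), where M_Φ is the maximal operator associated with the majorant Φ(u,z̄) = (1+|(u,z̄)|)^{-(1+n+γ)} for |u| > 1 and (1+|(u,z̄)|)^{-(1+n)} for |u| < 1 (in coordinates scaled by ℓ relative to x₀, and u the transversal coordinate). -/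
open MeasureTheory Set
open scoped ENNReal

noncomputable section

/-- The majorant `Φ(u, z̄) = (1+|(u,z̄)|)^{-(1+n+γ)}` for `|u| > 1` and
`(1+|(u,z̄)|)^{-(1+n)}` for `|u| < 1`; the coordinate `0` is the transversal coordinate `u`. -/
def PhiMaj (n : ℕ) (γ : ℝ) (z : HSPt n) : ℝ :=
  if 1 < |z 0| then (1 + ‖z‖) ^ (-((n : ℝ) + 1 + γ))
  else (1 + ‖z‖) ^ (-((n : ℝ) + 1))

/-- The maximal operator `M_Φ f = sup_{t>0} |f| * t^{-(n+1)} Φ(·/t)`. -/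
def maxPhi (n : ℕ) (γ : ℝ) (f : HSPt n → ℝ) (x : HSPt n) : ℝ≥0∞ :=
  ⨆ (t : ℝ) (_ : 0 < t),
    ∫⁻ y, ENNReal.ofReal (|f (x - y)| * t ^ (-((n : ℝ) + 1)) * PhiMaj n γ (t⁻¹ • y))

lemma phiMaj_nonneg (n : ℕ) (γ : ℝ) (z : HSPt n) : 0 ≤ PhiMaj n γ z := by
  unfold PhiMaj
  split <;> positivity

lemma aux_decay {m c s : ℝ} (hc : 0 < c) (hm : 2 / 5 * c ≤ m) (hs : 0 ≤ s) :
    m ^ (-s) ≤ (5 / 2 : ℝ) ^ s * c ^ (-s) := by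
  have h1 : (0 : ℝ) < 2 / 5 * c := by positivity
  have h2 : m ^ (-s) ≤ (2 / 5 * c) ^ (-s) :=
    Real.rpow_le_rpow_of_nonpos h1 hm (neg_nonpos.2 hs)
  calc m ^ (-s) ≤ (2 / 5 * c) ^ (-s) := h2
    _ = (2 / 5 : ℝ) ^ (-s) * c ^ (-s) := Real.mul_rpow (by norm_num) hc.le
    _ = (5 / 2 : ℝ) ^ s * c ^ (-s) := by
        rw [Real.rpow_neg (by norm_num), ← Real.inv_rpow (by norm_num)]
        norm_num

lemma aux_pow {n : ℕ} {s : ℝ} (h2 : s ≤ (n : ℝ) + 2) :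
    (5 / 2 : ℝ) ^ s ≤ (5 / 2 : ℝ) ^ (n + 2) := by
  have h := Real.rpow_le_rpow_of_exponent_le (by norm_num : (1 : ℝ) ≤ 5 / 2)
    (show s ≤ ((n + 2 : ℕ) : ℝ) by push_cast; linarith)
  rwa [Real.rpow_natCast] at h

set_option maxHeartbeats 1000000 in
/-- Key pointwise estimate for a generic causal truncation `c` of `k`. -/
lemma trunc_diff_bound {n : ℕ} {γ CK : ℝ} (hγ0 : 0 < γ) (hγ1 : γ ≤ 1) (hCK : 0 < CK)
    {k c : HSPt n → HSPt n → ℝ}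
    (hsize : ∀ x y : HSPt n, x ≠ y → |k x y| ≤ CK * ‖x - y‖ ^ (-((n : ℝ) + 1)))
    (hreg : ∀ x y t : HSPt n, x ≠ y → ‖t‖ ≤ ‖x - y‖ / 2 →
        max |k x (y + t) - k x y| |k (x + t) y - k x y| ≤
          CK * ‖t‖ ^ γ / ‖x - y‖ ^ ((n : ℝ) + 1 + γ))
    (hc1 : ∀ a b, |c a b| ≤ |k a b|)
    (hc2 : ∀ a b y, ((y 0 < a 0) ↔ (y 0 < b 0)) → ((a 0 < y 0) ↔ (b 0 < y 0)) →
        c a y - c b y = k a y - k b y ∨ c a y = c b y)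
    {x₀ : HSPt n} {ℓ : ℝ} (hℓ : 0 < ℓ)
    {x₁ x y : HSPt n} (hx₁ : ‖x₁ - x₀‖ ≤ ℓ / 2) (hx : ‖x - x₀‖ ≤ ℓ / 2)
    (hy : 3 * ℓ / 2 ≤ ‖y - x₀‖) :
    |c x₁ y - c x y| ≤
      2 * CK * (5 / 2 : ℝ) ^ (n + 2) * ℓ ^ (-((n : ℝ) + 1)) *
        PhiMaj n γ (ℓ⁻¹ • (x₀ - y)) := by
  set r : ℝ := ‖y - x₀‖ with hrdef
  have hr0 : 0 < r := lt_of_lt_of_le (by linarith) hy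
  have hℓr : ℓ ≤ 2 / 3 * r := by linarith
  have h25 : 2 / 5 * (ℓ + r) ≤ 2 / 3 * r := by linarith
  have hxr : ‖x₀ - y‖ = r := norm_sub_rev x₀ y
  -- distance from x₁, x to y
  have tri₁ : r ≤ ‖x₁ - y‖ + ‖x₁ - x₀‖ := by
    have h := norm_sub_le (y - x₁) (x₀ - x₁)
    have e : (y - x₁) - (x₀ - x₁) = y - x₀ := by abel
    rw [e] at h
    calc r = ‖y - x₀‖ := rfl
      _ ≤ ‖y - x₁‖ + ‖x₀ - x₁‖ := h
      _ = ‖x₁ - y‖ + ‖x₁ - x₀‖ := by rw [norm_sub_rev y x₁, norm_sub_rev x₀ x₁]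
  have tri : r ≤ ‖x - y‖ + ‖x - x₀‖ := by
    have h := norm_sub_le (y - x) (x₀ - x)
    have e : (y - x) - (x₀ - x) = y - x₀ := by abel
    rw [e] at h
    calc r = ‖y - x₀‖ := rfl
      _ ≤ ‖y - x‖ + ‖x₀ - x‖ := h
      _ = ‖x - y‖ + ‖x - x₀‖ := by rw [norm_sub_rev y x, norm_sub_rev x₀ x]
  have hxy1 : 2 / 3 * r ≤ ‖x₁ - y‖ := by linarith
  have hxy : 2 / 3 * r ≤ ‖x - y‖ := by linarith
  have hne₁ : x₁ ≠ y := by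
    have h : (0 : ℝ) < ‖x₁ - y‖ := lt_of_lt_of_le (by linarith) hxy1
    exact sub_ne_zero.mp (norm_pos_iff.mp h)
  have hne : x ≠ y := by
    have h : (0 : ℝ) < ‖x - y‖ := lt_of_lt_of_le (by linarith) hxy
    exact sub_ne_zero.mp (norm_pos_iff.mp h)
  have hne₀ : x₀ ≠ y := by
    have h : (0 : ℝ) < ‖x₀ - y‖ := by rw [hxr]; exact hr0
    exact sub_ne_zero.mp (norm_pos_iff.mp h)
  have hz0 : (ℓ⁻¹ • (x₀ - y)) 0 = ℓ⁻¹ * (x₀ 0 - y 0) := by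
    simp [Pi.smul_apply]
  have hznorm : ‖ℓ⁻¹ • (x₀ - y)‖ = ℓ⁻¹ * r := by
    rw [norm_smul, hxr, Real.norm_eq_abs, abs_of_pos (inv_pos.2 hℓ)]
  have h1z : 1 + ‖ℓ⁻¹ • (x₀ - y)‖ = (ℓ + r) / ℓ := by
    rw [hznorm]; field_simp
  have hℓrpos : (0 : ℝ) < ℓ + r := by linarith
  by_cases hcase : 1 < |(ℓ⁻¹ • (x₀ - y)) 0|
  · -- far in the transversal direction: truncations agree, use regularity
    have hsep : ℓ < |x₀ 0 - y 0| := by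
      rw [hz0, abs_mul, abs_inv, abs_of_pos hℓ, inv_mul_eq_div, one_lt_div hℓ] at hcase
      exact hcase
    have h₁0 : |x₁ 0 - x₀ 0| ≤ ℓ / 2 := by
      have h := norm_le_pi_norm (x₁ - x₀) 0
      simpa [Real.norm_eq_abs] using h.trans hx₁
    have hx0' : |x 0 - x₀ 0| ≤ ℓ / 2 := by
      have h := norm_le_pi_norm (x - x₀) 0
      simpa [Real.norm_eq_abs] using h.trans hx
    have a1 := abs_le.mp h₁0
    have a2 := abs_le.mp hx0'
    have hiff1 : (y 0 < x₁ 0) ↔ (y 0 < x 0) := by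
      rcases lt_abs.mp hsep with h | h
      · constructor <;> intro _ <;> linarith [a1.1, a1.2, a2.1, a2.2]
      · constructor <;> intro h' <;> (exfalso; linarith [a1.1, a1.2, a2.1, a2.2])
    have hiff2 : (x₁ 0 < y 0) ↔ (x 0 < y 0) := by
      rcases lt_abs.mp hsep with h | h
      · constructor <;> intro h' <;> (exfalso; linarith [a1.1, a1.2, a2.1, a2.2])
      · constructor <;> intro _ <;> linarith [a1.1, a1.2, a2.1, a2.2]
    simp only [PhiMaj, if_pos hcase, h1z]
    set s : ℝ := (n : ℝ) + 1 + γ with hsdef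
    have hs0 : 0 ≤ s := by positivity
    have hΦB : ℓ ^ (-((n : ℝ) + 1)) * ((ℓ + r) / ℓ) ^ (-s) =
        ℓ ^ γ * (ℓ + r) ^ (-s) := by
      rw [Real.div_rpow hℓrpos.le hℓ.le]
      rw [show ℓ ^ (-((n : ℝ) + 1)) * ((ℓ + r) ^ (-s) / ℓ ^ (-s)) =
        (ℓ ^ (-((n : ℝ) + 1)) / ℓ ^ (-s)) * (ℓ + r) ^ (-s) by ring]
      rw [← Real.rpow_sub hℓ]
      congr 2
      rw [hsdef]; ring
    rcases hc2 x₁ x y hiff1 hiff2 with heq | heq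
    · rw [heq, mul_assoc, hΦB]
      -- estimate |k x₁ y - k x y| via two applications of the regularity bound
      have B1 : |k x₁ y - k x₀ y| ≤ CK * ‖x₁ - x₀‖ ^ γ / ‖x₀ - y‖ ^ s := by
        have h := (le_max_right _ _).trans
          (hreg x₀ y (x₁ - x₀) hne₀ (by rw [hxr]; linarith))
        rwa [show x₀ + (x₁ - x₀) = x₁ by abel] at h
      have B2 : |k x₀ y - k x y| ≤ CK * ‖x₀ - x‖ ^ γ / ‖x - y‖ ^ s := by
        have hnx : ‖x₀ - x‖ ≤ ‖x - y‖ / 2 := by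
          rw [norm_sub_rev x₀ x]; linarith
        have h := (le_max_right _ _).trans (hreg x y (x₀ - x) hne hnx)
        rwa [show x + (x₀ - x) = x₀ by abel] at h
      rw [hxr, div_eq_mul_inv, ← Real.rpow_neg hr0.le] at B1
      rw [div_eq_mul_inv, ← Real.rpow_neg (norm_nonneg _)] at B2
      have N1 : ‖x₁ - x₀‖ ^ γ ≤ ℓ ^ γ :=
        Real.rpow_le_rpow (norm_nonneg _) (by linarith) hγ0.le
      have N2 : ‖x₀ - x‖ ^ γ ≤ ℓ ^ γ := by
        rw [norm_sub_rev x₀ x]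
        exact Real.rpow_le_rpow (norm_nonneg _) (by linarith) hγ0.le
      have hsle : s ≤ (n : ℝ) + 2 := by rw [hsdef]; linarith
      have D1 : r ^ (-s) ≤ (5 / 2 : ℝ) ^ (n + 2) * (ℓ + r) ^ (-s) := by
        refine (aux_decay hℓrpos (by linarith) hs0).trans ?_
        exact mul_le_mul_of_nonneg_right (aux_pow hsle) (Real.rpow_nonneg hℓrpos.le _)
      have D2 : ‖x - y‖ ^ (-s) ≤ (5 / 2 : ℝ) ^ (n + 2) * (ℓ + r) ^ (-s) := by
        refine (aux_decay hℓrpos (by linarith) hs0).trans ?_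
        exact mul_le_mul_of_nonneg_right (aux_pow hsle) (Real.rpow_nonneg hℓrpos.le _)
      have C1 : CK * ‖x₁ - x₀‖ ^ γ * r ^ (-s) ≤
          CK * ℓ ^ γ * ((5 / 2 : ℝ) ^ (n + 2) * (ℓ + r) ^ (-s)) :=
        mul_le_mul (mul_le_mul_of_nonneg_left N1 hCK.le) D1
          (Real.rpow_nonneg hr0.le _) (by positivity)
      have C2 : CK * ‖x₀ - x‖ ^ γ * ‖x - y‖ ^ (-s) ≤
          CK * ℓ ^ γ * ((5 / 2 : ℝ) ^ (n + 2) * (ℓ + r) ^ (-s)) :=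
        mul_le_mul (mul_le_mul_of_nonneg_left N2 hCK.le) D2
          (Real.rpow_nonneg (norm_nonneg _) _) (by positivity)
      have habs : |k x₁ y - k x y| ≤ |k x₁ y - k x₀ y| + |k x₀ y - k x y| :=
        abs_sub_le _ _ _
      linarith [B1, B2, C1, C2, habs]
    · rw [heq, sub_self, abs_zero, mul_assoc, hΦB]
      have := phiMaj_nonneg n γ (ℓ⁻¹ • (x₀ - y))
      positivity
  · -- near in the transversal direction: use the size bound only
    simp only [PhiMaj, if_neg hcase, h1z]
    set p : ℝ := (n : ℝ) + 1 with hpdef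
    have hp0 : 0 ≤ p := by positivity
    have hΦ : ℓ ^ (-p) * ((ℓ + r) / ℓ) ^ (-p) = (ℓ + r) ^ (-p) := by
      rw [Real.div_rpow hℓrpos.le hℓ.le, mul_comm,
        div_mul_cancel₀ _ (ne_of_gt (Real.rpow_pos_of_pos hℓ _))]
    rw [mul_assoc, hΦ]
    have hple : p ≤ (n : ℝ) + 2 := by rw [hpdef]; linarith
    have D1 : ‖x₁ - y‖ ^ (-p) ≤ (5 / 2 : ℝ) ^ (n + 2) * (ℓ + r) ^ (-p) := by
      refine (aux_decay hℓrpos (by linarith) hp0).trans ?_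
      exact mul_le_mul_of_nonneg_right (aux_pow hple) (Real.rpow_nonneg hℓrpos.le _)
    have D2 : ‖x - y‖ ^ (-p) ≤ (5 / 2 : ℝ) ^ (n + 2) * (ℓ + r) ^ (-p) := by
      refine (aux_decay hℓrpos (by linarith) hp0).trans ?_
      exact mul_le_mul_of_nonneg_right (aux_pow hple) (Real.rpow_nonneg hℓrpos.le _)
    have K1 : |k x₁ y| ≤ CK * ((5 / 2 : ℝ) ^ (n + 2) * (ℓ + r) ^ (-p)) :=
      (hsize x₁ y hne₁).trans (mul_le_mul_of_nonneg_left D1 hCK.le)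
    have K2 : |k x y| ≤ CK * ((5 / 2 : ℝ) ^ (n + 2) * (ℓ + r) ^ (-p)) :=
      (hsize x y hne).trans (mul_le_mul_of_nonneg_left D2 hCK.le)
    have habs : |c x₁ y - c x y| ≤ |c x₁ y| + |c x y| := abs_sub _ _
    linarith [habs, hc1 x₁ y, hc1 x y, K1, K2]

/-- A kernel with the Hölder regularity bound is continuous off the diagonal (in `y`). -/
lemma kernel_continuousOn {n : ℕ} {γ CK : ℝ} (hγ0 : 0 < γ)
    {k : HSPt n → HSPt n → ℝ}
    (hreg : ∀ x y t : HSPt n, x ≠ y → ‖t‖ ≤ ‖x - y‖ / 2 →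
        max |k x (y + t) - k x y| |k (x + t) y - k x y| ≤
          CK * ‖t‖ ^ γ / ‖x - y‖ ^ ((n : ℝ) + 1 + γ))
    (x₂ : HSPt n) : ContinuousOn (k x₂) {x₂}ᶜ := by
  intro y hy
  have hne : x₂ ≠ y := fun h => hy (by simp [h])
  have hpos : 0 < ‖x₂ - y‖ := norm_pos_iff.mpr (sub_ne_zero.mpr hne)
  have h0 : Filter.Tendsto (fun y' => k x₂ y' - k x₂ y) (nhds y) (nhds 0) := by
    apply squeeze_zero_norm'
      (a := fun y' : HSPt n => CK * ‖y' - y‖ ^ γ / ‖x₂ - y‖ ^ ((n : ℝ) + 1 + γ))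
    · filter_upwards [Metric.ball_mem_nhds y (half_pos hpos)] with y' hy'
      have ht : ‖y' - y‖ ≤ ‖x₂ - y‖ / 2 := (mem_ball_iff_norm.mp hy').le
      have h := (le_max_left _ _).trans (hreg x₂ y (y' - y) hne ht)
      rw [show y + (y' - y) = y' by abel] at h
      simpa [Real.norm_eq_abs] using h
    · have h1 : Filter.Tendsto (fun y' : HSPt n => ‖y' - y‖) (nhds y) (nhds 0) := by
        have : Continuous fun y' : HSPt n => ‖y' - y‖ :=
          (continuous_id.sub continuous_const).norm
        simpa using this.tendsto y
      have hc : ContinuousAt (fun u : ℝ => u ^ γ) 0 :=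
        Real.continuousAt_rpow_const 0 γ (Or.inr hγ0.le)
      have h2 : Filter.Tendsto (fun y' : HSPt n => ‖y' - y‖ ^ γ) (nhds y) (nhds 0) := by
        have := hc.tendsto.comp h1
        simpa [Function.comp_def, Real.zero_rpow hγ0.ne'] using this
      have h3 := (h2.const_mul CK).div_const (‖x₂ - y‖ ^ ((n : ℝ) + 1 + γ))
      simpa using h3
  have h4 : Filter.Tendsto (k x₂) (nhds y) (nhds (k x₂ y)) := by
    have := h0.add_const (k x₂ y)
    simpa using this
  have h5 : ContinuousAt (k x₂) y := h4
  exact h5.continuousWithinAt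

set_option maxHeartbeats 1000000 in
/-- Master estimate: the full domination for a generic truncation `c` of `k`. -/
lemma master_estimate {n : ℕ} {γ CK : ℝ} (hγ0 : 0 < γ) (hγ1 : γ ≤ 1) (hCK : 0 < CK)
    {k c : HSPt n → HSPt n → ℝ}
    (hsize : ∀ x y : HSPt n, x ≠ y → |k x y| ≤ CK * ‖x - y‖ ^ (-((n : ℝ) + 1)))
    (hreg : ∀ x y t : HSPt n, x ≠ y → ‖t‖ ≤ ‖x - y‖ / 2 →
        max |k x (y + t) - k x y| |k (x + t) y - k x y| ≤
          CK * ‖t‖ ^ γ / ‖x - y‖ ^ ((n : ℝ) + 1 + γ))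
    (hc1 : ∀ a b, |c a b| ≤ |k a b|)
    (hc2 : ∀ a b y, ((y 0 < a 0) ↔ (y 0 < b 0)) → ((a 0 < y 0) ↔ (b 0 < y 0)) →
        c a y - c b y = k a y - k b y ∨ c a y = c b y)
    {x₀ : HSPt n} {ℓ : ℝ} (hℓ : 0 < ℓ)
    {f : HSPt n → ℝ} (hf : Integrable f)
    (hsupp : ∀ y ∈ Metric.closedBall x₀ (3 * ℓ / 2), f y = 0)
    (hSM : ∀ x₂ ∈ Metric.closedBall x₀ (ℓ / 2),
      AEStronglyMeasurable (fun y => c x₂ y)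
        (volume.restrict (Metric.closedBall x₀ (3 * ℓ / 2))ᶜ))
    {x₁ x : HSPt n} (hx₁ : x₁ ∈ Metric.closedBall x₀ (ℓ / 2))
    (hx : x ∈ Metric.closedBall x₀ (ℓ / 2)) :
    ENNReal.ofReal |(∫ y, c x₁ y * f y) - ∫ y, c x y * f y| ≤
      ENNReal.ofReal (2 * CK * (5 / 2 : ℝ) ^ (n + 2)) * maxPhi n γ f x₀ := by
  set D : Set (HSPt n) := (Metric.closedBall x₀ (3 * ℓ / 2))ᶜ with hDdef
  have hD : MeasurableSet D := measurableSet_closedBall.compl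
  have hx₁' : ‖x₁ - x₀‖ ≤ ℓ / 2 := by
    rw [← dist_eq_norm]; exact Metric.mem_closedBall.mp hx₁
  have hx' : ‖x - x₀‖ ≤ ℓ / 2 := by
    rw [← dist_eq_norm]; exact Metric.mem_closedBall.mp hx
  -- integrability of the two integrands
  have hint : ∀ x₂ ∈ Metric.closedBall x₀ (ℓ / 2), Integrable (fun y => c x₂ y * f y) := by
    intro x₂ hx₂
    have heqI : (fun y => c x₂ y * f y) = D.indicator fun y => c x₂ y * f y := by
      funext y
      by_cases hy : y ∈ D
      · rw [Set.indicator_of_mem hy]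
      · rw [Set.indicator_of_notMem hy, hsupp y (Set.notMem_compl_iff.mp hy), mul_zero]
    rw [heqI, integrable_indicator_iff hD]
    have hb : ∀ y ∈ D, ‖c x₂ y * f y‖ ≤ CK * ℓ ^ (-((n : ℝ) + 1)) * ‖f y‖ := by
      intro y hyD
      have hyd : 3 * ℓ / 2 < dist y x₀ :=
        not_le.mp fun h => hyD (Metric.mem_closedBall.mpr h)
      have h1 : ℓ ≤ ‖x₂ - y‖ := by
        have ht := dist_triangle y x₂ x₀
        have h2 : dist x₂ x₀ ≤ ℓ / 2 := Metric.mem_closedBall.mp hx₂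
        have h3 : dist y x₂ = ‖x₂ - y‖ := by rw [dist_comm, dist_eq_norm]
        linarith
      have hne : x₂ ≠ y := by
        intro h
        rw [h, sub_self, norm_zero] at h1
        linarith
      have hk : |c x₂ y| ≤ CK * ℓ ^ (-((n : ℝ) + 1)) :=
        (hc1 _ _).trans ((hsize _ _ hne).trans (mul_le_mul_of_nonneg_left
          (Real.rpow_le_rpow_of_nonpos hℓ h1 (neg_nonpos.mpr (by positivity))) hCK.le))
      calc ‖c x₂ y * f y‖ = |c x₂ y| * ‖f y‖ := by
            rw [norm_mul, Real.norm_eq_abs]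
        _ ≤ CK * ℓ ^ (-((n : ℝ) + 1)) * ‖f y‖ :=
            mul_le_mul_of_nonneg_right hk (norm_nonneg _)
    refine Integrable.mono' ((hf.norm.const_mul (CK * ℓ ^ (-((n : ℝ) + 1)))).restrict)
      (((hSM x₂ hx₂).mul (hf.aestronglyMeasurable.restrict))) ?_
    exact (ae_restrict_iff' hD).mpr (Filter.Eventually.of_forall hb)
  have hint₁ := hint x₁ hx₁
  have hint₂ := hint x hx
  -- pointwise bound
  have hptw : ∀ y, |c x₁ y * f y - c x y * f y| ≤
      2 * CK * (5 / 2 : ℝ) ^ (n + 2) *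
        (|f y| * ℓ ^ (-((n : ℝ) + 1)) * PhiMaj n γ (ℓ⁻¹ • (x₀ - y))) := by
    intro y
    by_cases hfy : f y = 0
    · simp [hfy]
    · have hy : 3 * ℓ / 2 ≤ ‖y - x₀‖ := by
        by_contra h
        exact hfy (hsupp y (Metric.mem_closedBall.mpr (by rw [dist_eq_norm]; linarith)))
      calc |c x₁ y * f y - c x y * f y| = |c x₁ y - c x y| * |f y| := by
            rw [← sub_mul, abs_mul]
        _ ≤ 2 * CK * (5 / 2 : ℝ) ^ (n + 2) * ℓ ^ (-((n : ℝ) + 1)) *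
              PhiMaj n γ (ℓ⁻¹ • (x₀ - y)) * |f y| :=
            mul_le_mul_of_nonneg_right
              (trunc_diff_bound hγ0 hγ1 hCK hsize hreg hc1 hc2 hℓ hx₁' hx' hy)
              (abs_nonneg _)
        _ = 2 * CK * (5 / 2 : ℝ) ^ (n + 2) *
              (|f y| * ℓ ^ (-((n : ℝ) + 1)) * PhiMaj n γ (ℓ⁻¹ • (x₀ - y))) := by ring
  have hC0 : (0 : ℝ) ≤ 2 * CK * (5 / 2 : ℝ) ^ (n + 2) := by positivity
  calc ENNReal.ofReal |(∫ y, c x₁ y * f y) - ∫ y, c x y * f y|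
      = ENNReal.ofReal |∫ y, (c x₁ y * f y - c x y * f y)| := by
        rw [integral_sub hint₁ hint₂]
    _ ≤ ENNReal.ofReal (∫ y, |c x₁ y * f y - c x y * f y|) := by
        apply ENNReal.ofReal_le_ofReal
        exact norm_integral_le_integral_norm (fun y => c x₁ y * f y - c x y * f y)
    _ = ∫⁻ y, ENNReal.ofReal |c x₁ y * f y - c x y * f y| :=
        ofReal_integral_eq_lintegral_ofReal (hint₁.sub hint₂).abs
          (Filter.Eventually.of_forall fun y => abs_nonneg _)
    _ ≤ ∫⁻ y, ENNReal.ofReal (2 * CK * (5 / 2 : ℝ) ^ (n + 2) *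
          (|f y| * ℓ ^ (-((n : ℝ) + 1)) * PhiMaj n γ (ℓ⁻¹ • (x₀ - y)))) :=
        lintegral_mono fun y => ENNReal.ofReal_le_ofReal (hptw y)
    _ = ENNReal.ofReal (2 * CK * (5 / 2 : ℝ) ^ (n + 2)) *
          ∫⁻ y, ENNReal.ofReal
            (|f y| * ℓ ^ (-((n : ℝ) + 1)) * PhiMaj n γ (ℓ⁻¹ • (x₀ - y))) := by
        simp_rw [ENNReal.ofReal_mul hC0]
        rw [lintegral_const_mul' _ _ ENNReal.ofReal_ne_top]
    _ ≤ ENNReal.ofReal (2 * CK * (5 / 2 : ℝ) ^ (n + 2)) * maxPhi n γ f x₀ := by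
        apply mul_le_mul_right
        have hchg : ∫⁻ y, ENNReal.ofReal
              (|f y| * ℓ ^ (-((n : ℝ) + 1)) * PhiMaj n γ (ℓ⁻¹ • (x₀ - y)))
            = ∫⁻ y, ENNReal.ofReal
              (|f (x₀ - y)| * ℓ ^ (-((n : ℝ) + 1)) * PhiMaj n γ (ℓ⁻¹ • y)) := by
          have key := ((Measure.measurePreserving_sub_left volume x₀).lintegral_map_equiv
            (fun z => ENNReal.ofReal
              (|f (x₀ - z)| * ℓ ^ (-((n : ℝ) + 1)) * PhiMaj n γ (ℓ⁻¹ • z)))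
            (MeasurableEquiv.subLeft x₀)).symm
          have hE : ∀ a : HSPt n, (MeasurableEquiv.subLeft x₀) a = x₀ - a := fun a => rfl
          simp only [hE, MeasurableEquiv.coe_mk,
            Equiv.subLeft_apply, sub_sub_cancel] at key
          exact key
        rw [hchg]
        unfold maxPhi
        exact le_iSup₂ (f := fun (t : ℝ) (_ : 0 < t) => ∫⁻ y, ENNReal.ofReal
          (|f (x₀ - y)| * t ^ (-((n : ℝ) + 1)) * PhiMaj n γ (t⁻¹ • y))) ℓ hℓ

/-- Pointwise domination by a decaying majorant: if `k` satisfies the CZ size and Hölder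
regularity bounds of order `γ ∈ (0,1]`, `Q` is a cube of side `ℓ` centered at `x₀` in the
half-space, and `f` is supported in `(3Q)ᶜ`, then for all `x₁, x ∈ Q`,
`|S^± f(x₁) - S^± f(x)| ≤ C M_Φ f(x₀)` for both causal truncations `S^±`,
with `C` depending only on `n`, `γ` and the kernel constant. -/
theorem causal_pointwise_domination (n : ℕ) (γ CK : ℝ)
    (hγ0 : 0 < γ) (hγ1 : γ ≤ 1) (hCK : 0 < CK) :
    ∃ C : ℝ, 0 < C ∧ ∀ k : HSPt n → HSPt n → ℝ,
      (∀ x y : HSPt n, x ≠ y → |k x y| ≤ CK * ‖x - y‖ ^ (-((n : ℝ) + 1))) →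
      (∀ x y t : HSPt n, x ≠ y → ‖t‖ ≤ ‖x - y‖ / 2 →
        max |k x (y + t) - k x y| |k (x + t) y - k x y| ≤
          CK * ‖t‖ ^ γ / ‖x - y‖ ^ ((n : ℝ) + 1 + γ)) →
      ∀ (x₀ : HSPt n) (ℓ : ℝ), 0 < ℓ →
        Metric.closedBall x₀ (ℓ / 2) ⊆ upperHalf n →
        ∀ f : HSPt n → ℝ, Integrable f →
        (∀ y ∈ Metric.closedBall x₀ (3 * ℓ / 2), f y = 0) →
        (∀ y, y ∉ upperHalf n → f y = 0) →
        ∀ x₁ ∈ Metric.closedBall x₀ (ℓ / 2), ∀ x ∈ Metric.closedBall x₀ (ℓ / 2),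
          ENNReal.ofReal
              |(∫ y, causalPlus k x₁ y * f y) - ∫ y, causalPlus k x y * f y| ≤
            ENNReal.ofReal C * maxPhi n γ f x₀ ∧
          ENNReal.ofReal
              |(∫ y, causalMinus k x₁ y * f y) - ∫ y, causalMinus k x y * f y| ≤
            ENNReal.ofReal C * maxPhi n γ f x₀ := by
  refine ⟨2 * CK * (5 / 2 : ℝ) ^ (n + 2), by positivity, ?_⟩
  intro k hsize hreg x₀ ℓ hℓ _ f hf hsupp _ x₁ hx₁ x hx
  have hcont := kernel_continuousOn (CK := CK) hγ0 hreg
  have hSMk : ∀ x₂ ∈ Metric.closedBall x₀ (ℓ / 2),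
      AEStronglyMeasurable (k x₂)
        (volume.restrict (Metric.closedBall x₀ (3 * ℓ / 2))ᶜ) := by
    intro x₂ hx₂
    have hsub : (Metric.closedBall x₀ (3 * ℓ / 2))ᶜ ⊆ ({x₂} : Set (HSPt n))ᶜ := by
      intro y hy
      simp only [Set.mem_compl_iff, Set.mem_singleton_iff]
      intro h
      exact hy (h ▸ Metric.closedBall_subset_closedBall (by linarith) hx₂)
    exact ((hcont x₂).mono hsub).aestronglyMeasurable measurableSet_closedBall.compl
  constructor
  · refine master_estimate hγ0 hγ1 hCK hsize hreg ?_ ?_ hℓ hf hsupp ?_ hx₁ hx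
    · intro a b
      unfold causalPlus
      split
      · exact le_refl _
      · simp
    · intro a b y h1 _
      unfold causalPlus
      by_cases h : y 0 < a 0
      · rw [if_pos h, if_pos (h1.mp h)]
        left; rfl
      · rw [if_neg h, if_neg fun hh => h (h1.mpr hh)]
        right; rfl
    · intro x₂ hx₂
      have heq : (fun y => causalPlus k x₂ y) =
          Set.indicator {y : HSPt n | y 0 < x₂ 0} (k x₂) := by
        funext y
        simp [causalPlus, Set.indicator_apply, Set.mem_setOf_eq]
      rw [heq]
      exact (hSMk x₂ hx₂).indicator
        (measurableSet_lt (measurable_pi_apply 0) measurable_const)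
  · refine master_estimate hγ0 hγ1 hCK hsize hreg ?_ ?_ hℓ hf hsupp ?_ hx₁ hx
    · intro a b
      unfold causalMinus
      split
      · exact le_refl _
      · simp
    · intro a b y _ h2
      unfold causalMinus
      by_cases h : a 0 < y 0
      · rw [if_pos h, if_pos (h2.mp h)]
        left; rfl
      · rw [if_neg h, if_neg fun hh => h (h2.mpr hh)]
        right; rfl
    · intro x₂ hx₂
      have heq : (fun y => causalMinus k x₂ y) =
          Set.indicator {y : HSPt n | x₂ 0 < y 0} (k x₂) := by
        funext y
        simp [causalMinus, Set.indicator_apply, Set.mem_setOf_eq]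
      rw [heq]
      exact (hSMk x₂ hx₂).indicator
        (measurableSet_lt measurable_const (measurable_pi_apply 0))
end
end
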